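/- arXiv:2307.07587 — 5 statements merged into one kernel-verified Lean document; each statement's English description precedes it below -/
import Mathlib

section
/- Fix integers d, N ≥ 1 and reals β, C_LS, 𝖢 > 0. Let g : ℝ^d × ℝ^d → ℝ be symmetric and measurable. Let (μ^t)_{t≥0} be probability densities on ℝ^d and (f_N^t)_{t≥0} probability densities on (ℝ^d)^N, positive and C¹ in the space variable and continuous in t, such that for every t ≥ 0: K_{N,β}(μ^t) ∈ (0,∞), the modulated Gibbs measure Q_{N,β}(μ^t) has a positive C¹ density q_N^t with respect to Lebesgue measure, all quantities appearing below are finite and continuous in t, and t ↦ E_N(f_N^t, μ^t) is differentiable. Let a : [0,∞) → [0,∞) be continuous, let b : [0,∞) → [0,∞) be C¹ with E_N(f_N^t, μ^t) + b(t) ≥ 0 for all t, and set k(t) := log K_{N,β}(μ^t)/(βN), assumed continuous in t. Assume: (i) for every t ≥ 0, (d/dt) E_N(f_N^t, μ^t) ≤ −(1/(β²N)) ∫ |∇ log(f_N^t/q_N^t)|² df_N^t + (𝖢 a(t)/2)(E_N(f_N^t, μ^t) + b(t)); and (ii) for every t ≥ 0, the logarithmic Sobolev inequality ∫ φ² log(φ²/∫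 φ² dQ_{N,β}(μ^t)) dQ_{N,β}(μ^t) ≤ C_LS ∫ |∇φ|² dQ_{N,β}(μ^t) holds for the function φ = √(f_N^t/q_N^t). Then, writing 𝓔_N^t := E_N(f_N^t, μ^t) + b(t), for every t ≥ 0 one has 𝓔_N^t ≤ e^{−4t/(βC_LS) + ∫_0^t (𝖢 a(τ)/2) dτ} 𝓔_N^0 + e^{−4t/(βC_LS) + ∫_0^t (𝖢 a(τ)/2) dτ} ∫_0^t e^{4τ/(βC_LS) − ∫_0^τ (𝖢 a(τ')/2) dτ'} [ b'(τ) + (4/(βC_LS))( b(τ) − k(τ) ) ] dτ. -/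
open MeasureTheory

noncomputable section

/-- The modulated energy
`F_N(X_N, μ) = (1/(2N²)) Σ_{i≠j} g(x_i,x_j) − (1/N) Σ_i ∫ g(x_i,y) dμ(y)
  + (1/2) ∬ g dμ dμ`. -/
def modEnergy (d N : ℕ) (g : EuclideanSpace ℝ (Fin d) → EuclideanSpace ℝ (Fin d) → ℝ)
    (μ : Measure (EuclideanSpace ℝ (Fin d))) (X : Fin N → EuclideanSpace ℝ (Fin d)) : ℝ :=
  (1 / (2 * (N : ℝ) ^ 2)) * ∑ i : Fin N, ∑ j ∈ Finset.univ.erase i, g (X i) (X j)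
    - (1 / (N : ℝ)) * ∑ i : Fin N, ∫ y, g (X i) y ∂μ
    + (1 / 2) * ∫ x, ∫ y, g x y ∂μ ∂μ

/-- The partition function `K_{N,β}(μ) = ∫ exp(−βN F_N(X_N,μ)) dμ^{⊗N}(X_N)`. -/
def Kpart (d N : ℕ) (β : ℝ) (g : EuclideanSpace ℝ (Fin d) → EuclideanSpace ℝ (Fin d) → ℝ)
    (μ : Measure (EuclideanSpace ℝ (Fin d))) : ℝ :=
  ∫ X : Fin N → EuclideanSpace ℝ (Fin d),
    Real.exp (-(β * N * modEnergy d N g μ X)) ∂(Measure.pi fun _ => μ)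

/-- The modulated Gibbs measure `Q_{N,β}(μ)`, with density
`exp(−βN F_N(X_N,μ))/K_{N,β}(μ)` with respect to `μ^{⊗N}`. -/
def modGibbs (d N : ℕ) (β : ℝ) (g : EuclideanSpace ℝ (Fin d) → EuclideanSpace ℝ (Fin d) → ℝ)
    (μ : Measure (EuclideanSpace ℝ (Fin d))) : Measure (Fin N → EuclideanSpace ℝ (Fin d)) :=
  (Measure.pi fun _ => μ).withDensity fun X =>
    ENNReal.ofReal (Real.exp (-(β * N * modEnergy d N g μ X)) / Kpart d N β g μ)

/-- The normalized relative entropy `H_N(f | g) = (1/N) ∫ log(df/dg) df`. -/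
def relEnt {α : Type*} [MeasurableSpace α] (N : ℕ) (f g : Measure α) : ℝ :=
  (1 / (N : ℝ)) * ∫ x, Real.log ((f.rnDeriv g x).toReal) ∂f

/-- The modulated free energy
`E_N(f_N, μ) = (1/β) H_N(f_N | μ^{⊗N}) + ∫ F_N(X_N,μ) df_N(X_N)`. -/
def modFreeEnergy (d N : ℕ) (β : ℝ)
    (g : EuclideanSpace ℝ (Fin d) → EuclideanSpace ℝ (Fin d) → ℝ)
    (f : Measure (Fin N → EuclideanSpace ℝ (Fin d)))
    (μ : Measure (EuclideanSpace ℝ (Fin d))) : ℝ :=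
  (1 / β) * relEnt N f (Measure.pi fun _ => μ) + ∫ X, modEnergy d N g μ X ∂f

/-- The measure on `ℝ^d` with density `μ` with respect to Lebesgue measure. -/
def densMeasure (d : ℕ) (μ : EuclideanSpace ℝ (Fin d) → ℝ) :
    Measure (EuclideanSpace ℝ (Fin d)) :=
  volume.withDensity fun x => ENNReal.ofReal (μ x)

/-- The measure on `(ℝ^d)^N` with density `f` with respect to Lebesgue measure. -/
def densMeasureN (d N : ℕ) (f : (Fin N → EuclideanSpace ℝ (Fin d)) → ℝ) :
    Measure (Fin N → EuclideanSpace ℝ (Fin d)) :=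
  volume.withDensity fun X => ENNReal.ofReal (f X)

/-!
The identity `E_N(f, μ) + log K_{N,β}(μ) / (βN) = (βN)⁻¹ H(f | Q_{N,β}(μ))` turns the logarithmic
Sobolev inequality at `φ = √(f / q)`, whose Dirichlet energy `∫ |∇φ|² dQ` is a quarter of the
relative Fisher information `∫ |∇ log (f / q)|² df`, into the lower bound
`(4 / (β C_LS)) (E_N + k) ≤ (β² N)⁻¹ ∫ |∇ log (f / q)|² df` for the dissipation. Inserted into (i)
it gives `𝓔' ≤ (-4 / (β C_LS) + 𝖢 a / 2) 𝓔 + b' + (4 / (β C_LS)) (b - k)`, which Grönwall's lemma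
integrates.
-/

open Set

section Gronwall

variable {f : ℝ → ℝ}

theorem hasDerivAt_integral_of_continuousOn_Ici (hf : ContinuousOn f (Ici 0)) {s : ℝ}
    (hs : 0 < s) : HasDerivAt (fun t => ∫ x in (0 : ℝ)..t, f x) (f s) s :=
  intervalIntegral.integral_hasDerivAt_right
    ((hf.mono fun _ hx => (uIcc_of_le hs.le ▸ hx).1).intervalIntegrable)
    ((hf.mono Ioi_subset_Ici_self).stronglyMeasurableAtFilter isOpen_Ioi s hs)
    (hf.continuousAt (Ici_mem_nhds hs))

theorem continuousOn_integral_of_continuousOn_Ici (hf : ContinuousOn f (Ici 0)) :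
    ContinuousOn (fun t => ∫ x in (0 : ℝ)..t, f x) (Ici 0) := by
  intro s hs
  rcases (mem_Ici.mp hs).eq_or_lt with rfl | hs
  · have : HasDerivWithinAt (fun t => ∫ x in (0 : ℝ)..t, f x) (f 0) (Ici 0) 0 :=
      intervalIntegral.integral_hasDerivWithinAt_right IntervalIntegrable.refl
        ((hf.mono Ioi_subset_Ici_self).stronglyMeasurableAtFilter_nhdsWithin measurableSet_Ioi 0)
        ((hf 0 self_mem_Ici).mono Ioi_subset_Ici_self)
    exact this.continuousWithinAt
  · exact (hasDerivAt_integral_of_continuousOn_Ici hf hs).continuousAt.continuousWithinAt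

theorem le_exp_integral_mul_of_hasDerivAt_le {r c y y' : ℝ → ℝ} (hr : ContinuousOn r (Ici 0))
    (hc : ContinuousOn c (Ici 0)) (hy : ∀ t, 0 ≤ t → HasDerivAt y (y' t) t)
    (hy' : ∀ t, 0 ≤ t → y' t ≤ r t * y t + c t) {t : ℝ} (ht : 0 ≤ t) :
    y t ≤ Real.exp (∫ τ in (0 : ℝ)..t, r τ) *
      (y 0 + ∫ τ in (0 : ℝ)..t, Real.exp (-∫ σ in (0 : ℝ)..τ, r σ) * c τ) := by
  set R := fun t => ∫ τ in (0 : ℝ)..t, r τ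
  set w := fun τ => Real.exp (-R τ) * c τ
  have hR : ContinuousOn R (Ici 0) := continuousOn_integral_of_continuousOn_Ici hr
  have hw : ContinuousOn w (Ici 0) := (Real.continuous_exp.comp_continuousOn hR.neg).mul hc
  have hy_cont : ContinuousOn y (Ici 0) := fun s hs =>
    (hy s hs).continuousAt.continuousWithinAt
  have hanti : AntitoneOn (fun s => Real.exp (-R s) * y s - ∫ τ in (0 : ℝ)..s, w τ) (Ici 0) := by
    refine antitoneOn_of_hasDerivWithinAt_nonpos (convex_Ici 0)
      (f' := fun s => Real.exp (-R s) * -r s * y s + Real.exp (-R s) * y' s - w s)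
      (((Real.continuous_exp.comp_continuousOn hR.neg).mul hy_cont).sub
        (continuousOn_integral_of_continuousOn_Ici hw)) (fun s hs => ?_) (fun s hs => ?_)
    · rw [interior_Ici] at hs
      exact ((((hasDerivAt_integral_of_continuousOn_Ici hr hs).neg.exp.mul (hy s hs.le)).sub
        (hasDerivAt_integral_of_continuousOn_Ici hw hs))).hasDerivWithinAt
    · rw [interior_Ici] at hs
      have := mul_le_mul_of_nonneg_left (hy' s hs.le) (Real.exp_pos (-R s)).le
      simp only [w]
      linarith
  have hT := hanti self_mem_Ici ht ht
  simp only [R, intervalIntegral.integral_same, neg_zero, Real.exp_zero, one_mul, sub_zero] at hT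
  calc y t = Real.exp (R t) * (Real.exp (-R t) * y t) := by
        rw [← mul_assoc, ← Real.exp_add, add_neg_cancel, Real.exp_zero, one_mul]
    _ ≤ _ := mul_le_mul_of_nonneg_left (by linarith) (Real.exp_pos _).le

theorem le_exp_of_hasDerivAt_le_neg_const_add {L : ℝ} {A c y y' : ℝ → ℝ}
    (hA : ContinuousOn A (Ici 0)) (hc : ContinuousOn c (Ici 0))
    (hy : ∀ t, 0 ≤ t → HasDerivAt y (y' t) t)
    (hy' : ∀ t, 0 ≤ t → y' t ≤ (-L + A t) * y t + c t) {t : ℝ} (ht : 0 ≤ t) :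
    y t ≤ Real.exp (-(L * t) + ∫ τ in (0 : ℝ)..t, A τ) *
      (y 0 + ∫ τ in (0 : ℝ)..t, Real.exp (L * τ - ∫ σ in (0 : ℝ)..τ, A σ) * c τ) := by
  have hint : ∀ s, 0 ≤ s → ∫ τ in (0 : ℝ)..s, (-L + A τ) = -(L * s) + ∫ τ in (0 : ℝ)..s, A τ :=
    fun s hs => by
      rw [intervalIntegral.integral_add intervalIntegrable_const
        (hA.mono fun _ hx => (uIcc_of_le hs ▸ hx).1).intervalIntegrable,
        intervalIntegral.integral_const, smul_eq_mul, sub_zero, mul_neg, mul_comm]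
  have := le_exp_integral_mul_of_hasDerivAt_le (r := fun τ => -L + A τ)
    (continuousOn_const.add hA) hc hy hy' ht
  rw [hint t ht] at this
  convert this using 3
  refine intervalIntegral.integral_congr fun τ hτ => ?_
  rw [hint τ (uIcc_of_le ht ▸ hτ).1, neg_add, neg_neg, sub_eq_add_neg]

end Gronwall

section Density

variable {α : Type*} [MeasurableSpace α] {ρ : Measure α}

theorem integral_withDensity_ofReal {f : α → ℝ} (hf : Measurable f) (hf0 : ∀ x, 0 ≤ f x)
    (φ : α → ℝ) : ∫ x, φ x ∂(ρ.withDensity fun x => ENNReal.ofReal (f x)) = ∫ x, f x * φ x ∂ρ := by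
  rw [integral_withDensity_eq_integral_toReal_smul hf.ennreal_ofReal
    (.of_forall fun _ => ENNReal.ofReal_lt_top)]
  simp only [ENNReal.toReal_ofReal (hf0 _), smul_eq_mul]

theorem withDensity_ofReal_eq_withDensity_div {f q : α → ℝ} (hf : Measurable f) (hq : Measurable q)
    (hq_pos : ∀ x, 0 < q x) :
    ρ.withDensity (fun x => ENNReal.ofReal (f x)) =
      (ρ.withDensity fun x => ENNReal.ofReal (q x)).withDensity
        fun x => ENNReal.ofReal (f x / q x) := by
  rw [← withDensity_mul _ hq.ennreal_ofReal (by fun_prop)]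
  congr 1 with x
  rw [Pi.mul_apply, ← ENNReal.ofReal_mul (hq_pos x).le, mul_div_cancel₀ _ (hq_pos x).ne']

theorem toReal_rnDeriv_ae_eq_mul_div {ν : Measure α} [SigmaFinite ν] {w f q : α → ℝ}
    (hw : Measurable w) (hw0 : ∀ x, 0 ≤ w x) (hf : Measurable f) (hf0 : ∀ x, 0 ≤ f x)
    (hq : Measurable q) (hq_pos : ∀ x, 0 < q x)
    (hQ : ν.withDensity (fun x => ENNReal.ofReal (w x)) =
      ρ.withDensity fun x => ENNReal.ofReal (q x)) :
    ∀ᵐ x ∂(ρ.withDensity fun x => ENNReal.ofReal (f x)),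
      ((ρ.withDensity fun x => ENNReal.ofReal (f x)).rnDeriv ν x).toReal = w x * (f x / q x) := by
  have hF : ρ.withDensity (fun x => ENNReal.ofReal (f x)) =
      ν.withDensity fun x => ENNReal.ofReal (w x * (f x / q x)) := by
    rw [withDensity_ofReal_eq_withDensity_div hf hq hq_pos, ← hQ,
      ← withDensity_mul _ hw.ennreal_ofReal (by fun_prop)]
    congr 1 with x
    rw [Pi.mul_apply, ENNReal.ofReal_mul (hw0 x)]
  rw [hF]
  filter_upwards [withDensity_absolutelyContinuous _ _ |>.ae_le
    (Measure.rnDeriv_withDensity ν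
      (f := fun x => ENNReal.ofReal (w x * (f x / q x))) (by fun_prop))]
    with x hx
  rw [hx, ENNReal.toReal_ofReal (mul_nonneg (hw0 x) (div_nonneg (hf0 x) (hq_pos x).le))]

end Density

section Fisher

variable {E : Type*} [NormedAddCommGroup E] [NormedSpace ℝ E]

theorem sq_norm_fderiv_sqrt {u : E → ℝ} {x : E} (hu : DifferentiableAt ℝ u x) (hx : 0 < u x) :
    ‖fderiv ℝ (fun y => √(u y)) x‖ ^ 2 = u x / 4 * ‖fderiv ℝ (fun y => Real.log (u y)) x‖ ^ 2 := by
  rw [(hu.hasFDerivAt.sqrt hx.ne').fderiv, (hu.hasFDerivAt.log hx.ne').fderiv, norm_smul,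
    norm_smul, mul_pow, mul_pow, Real.norm_eq_abs, Real.norm_eq_abs, sq_abs, sq_abs, div_pow,
    mul_pow, Real.sq_sqrt hx.le, inv_pow]
  field_simp
  ring

variable [MeasurableSpace E] [OpensMeasurableSpace E] {ρ : Measure E} {f q : E → ℝ}

theorem integral_log_div_le_of_logSobolev {C : ℝ} (hf : Differentiable ℝ f)
    (hq : Differentiable ℝ q) (hf_pos : ∀ x, 0 < f x) (hq_pos : ∀ x, 0 < q x)
    [IsProbabilityMeasure (ρ.withDensity fun x => ENNReal.ofReal (f x))]
    (hLSI : ∫ x, √(f x / q x) ^ 2 * Real.log (√(f x / q x) ^ 2 /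
          ∫ y, √(f y / q y) ^ 2 ∂(ρ.withDensity fun x => ENNReal.ofReal (q x)))
          ∂(ρ.withDensity fun x => ENNReal.ofReal (q x))
        ≤ C * ∫ x, ‖fderiv ℝ (fun y => √(f y / q y)) x‖ ^ 2
          ∂(ρ.withDensity fun x => ENNReal.ofReal (q x))) :
    ∫ x, Real.log (f x / q x) ∂(ρ.withDensity fun x => ENNReal.ofReal (f x))
      ≤ C / 4 * ∫ x, ‖fderiv ℝ (fun y => Real.log (f y / q y)) x‖ ^ 2
        ∂(ρ.withDensity fun x => ENNReal.ofReal (f x)) := by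
  have hu : ∀ x, 0 < f x / q x := fun x => div_pos (hf_pos x) (hq_pos x)
  have hQF : ∀ φ : E → ℝ, ∫ x, f x / q x * φ x ∂(ρ.withDensity fun x => ENNReal.ofReal (q x)) =
      ∫ x, φ x ∂(ρ.withDensity fun x => ENNReal.ofReal (f x)) := fun φ => by
    rw [withDensity_ofReal_eq_withDensity_div hf.continuous.measurable hq.continuous.measurable
      hq_pos, integral_withDensity_ofReal (f := fun x => f x / q x)
      (hf.continuous.measurable.div hq.continuous.measurable) fun x => (hu x).le]
  have hmass : ∫ y, √(f y / q y) ^ 2 ∂(ρ.withDensity fun x => ENNReal.ofReal (q x)) = 1 := by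
    simpa [Real.sq_sqrt (hu _).le] using hQF fun _ => 1
  have hent : ∫ x, √(f x / q x) ^ 2 * Real.log (√(f x / q x) ^ 2 / 1)
      ∂(ρ.withDensity fun x => ENNReal.ofReal (q x)) =
      ∫ x, Real.log (f x / q x) ∂(ρ.withDensity fun x => ENNReal.ofReal (f x)) := by
    simp only [Real.sq_sqrt (hu _).le, div_one, hQF]
  have hfisher : ∫ x, ‖fderiv ℝ (fun y => √(f y / q y)) x‖ ^ 2
      ∂(ρ.withDensity fun x => ENNReal.ofReal (q x)) =
      1 / 4 * ∫ x, ‖fderiv ℝ (fun y => Real.log (f y / q y)) x‖ ^ 2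
        ∂(ρ.withDensity fun x => ENNReal.ofReal (f x)) := by
    rw [← integral_const_mul, ← hQF]
    refine integral_congr_ae (.of_forall fun x => ?_)
    have hdiff : DifferentiableAt ℝ (fun y => f y / q y) x := by
      fun_prop (disch := exact (hq_pos x).ne')
    beta_reduce
    rw [sq_norm_fderiv_sqrt hdiff (hu x)]
    ring
  rw [hmass, hent, hfisher] at hLSI
  linarith

end Fisher

section ModulatedEnergy

instance (d : ℕ) (μ : EuclideanSpace ℝ (Fin d) → ℝ) : SigmaFinite (densMeasure d μ) :=
  SigmaFinite.withDensity_ofReal _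

variable {d N : ℕ} {g : EuclideanSpace ℝ (Fin d) → EuclideanSpace ℝ (Fin d) → ℝ}
  {μ : Measure (EuclideanSpace ℝ (Fin d))}

theorem measurable_modEnergy [SFinite μ] (hg : Measurable (Function.uncurry g)) :
    Measurable (modEnergy d N g μ) := by
  unfold modEnergy
  refine .add (.sub ?_ ?_) measurable_const
  · exact (Finset.measurable_sum _ fun i _ => Finset.measurable_sum _ fun j _ =>
      hg.comp ((measurable_pi_apply i).prodMk (measurable_pi_apply j))).const_mul _
  · exact (Finset.measurable_sum _ fun i _ =>
      (hg.stronglyMeasurable.integral_prod_right' (ν := μ)).measurable.comp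
        (measurable_pi_apply i)).const_mul _

theorem modFreeEnergy_add_log_Kpart_div [SigmaFinite μ] {β : ℝ}
    {f q : (Fin N → EuclideanSpace ℝ (Fin d)) → ℝ} (hg : Measurable (Function.uncurry g))
    (hβ : β ≠ 0) (hN : N ≠ 0) (hf : Measurable f) (hf_pos : ∀ X, 0 < f X)
    (hq : Measurable q) (hq_pos : ∀ X, 0 < q X) [IsProbabilityMeasure (densMeasureN d N f)]
    (hK : 0 < Kpart d N β g μ) (hQ : modGibbs d N β g μ = densMeasureN d N q)
    (hH : Integrable (fun X => Real.log (((densMeasureN d N f).rnDeriv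
      (Measure.pi fun _ : Fin N => μ) X).toReal)) (densMeasureN d N f))
    (hF : Integrable (modEnergy d N g μ) (densMeasureN d N f)) :
    modFreeEnergy d N β g (densMeasureN d N f) μ + Real.log (Kpart d N β g μ) / (β * N) =
      (β * N)⁻¹ * ∫ X, Real.log (f X / q X) ∂(densMeasureN d N f) := by
  have hw : Measurable fun X => Real.exp (-(β * N * modEnergy d N g μ X)) / Kpart d N β g μ :=
    ((measurable_modEnergy hg).const_mul _).neg.exp.div_const _
  have hlog : ∀ᵐ X ∂(densMeasureN d N f), Real.log (f X / q X) =
      Real.log (((densMeasureN d N f).rnDeriv (Measure.pi fun _ : Fin N => μ) X).toReal) +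
        (β * N * modEnergy d N g μ X + Real.log (Kpart d N β g μ)) := by
    filter_upwards [toReal_rnDeriv_ae_eq_mul_div hw (fun X => (div_pos (Real.exp_pos _) hK).le)
      hf (fun X => (hf_pos X).le) hq hq_pos hQ] with X hX
    rw [densMeasureN, hX, Real.log_mul (div_pos (Real.exp_pos _) hK).ne'
      (div_pos (hf_pos X) (hq_pos X)).ne', Real.log_div (Real.exp_pos _).ne' hK.ne', Real.log_exp]
    ring
  have hF' : Integrable (fun X => β * N * modEnergy d N g μ X + Real.log (Kpart d N β g μ))
      (densMeasureN d N f) := (hF.const_mul _).add (integrable_const _)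
  rw [integral_congr_ae hlog, integral_add hH hF', integral_add (hF.const_mul _)
    (integrable_const _), integral_const_mul, integral_const]
  simp only [modFreeEnergy, relEnt, probReal_univ, one_smul]
  field_simp
  ring

theorem four_div_mul_modFreeEnergy_add_le_of_logSobolev [SigmaFinite μ] {β CLS : ℝ}
    {f q : (Fin N → EuclideanSpace ℝ (Fin d)) → ℝ} (hg : Measurable (Function.uncurry g))
    (hβ : 0 < β) (hCLS : 0 < CLS) (hN : N ≠ 0) (hf : Differentiable ℝ f) (hf_pos : ∀ X, 0 < f X)
    (hq : Differentiable ℝ q) (hq_pos : ∀ X, 0 < q X) [IsProbabilityMeasure (densMeasureN d N f)]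
    (hK : 0 < Kpart d N β g μ) (hQ : modGibbs d N β g μ = densMeasureN d N q)
    (hH : Integrable (fun X => Real.log (((densMeasureN d N f).rnDeriv
      (Measure.pi fun _ : Fin N => μ) X).toReal)) (densMeasureN d N f))
    (hF : Integrable (modEnergy d N g μ) (densMeasureN d N f))
    (hLSI : ∫ X, √(f X / q X) ^ 2 * Real.log (√(f X / q X) ^ 2 /
          ∫ Y, √(f Y / q Y) ^ 2 ∂(modGibbs d N β g μ)) ∂(modGibbs d N β g μ)
        ≤ CLS * ∫ X, ‖fderiv ℝ (fun Y => √(f Y / q Y)) X‖ ^ 2 ∂(modGibbs d N β g μ)) :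
    4 / (β * CLS) * (modFreeEnergy d N β g (densMeasureN d N f) μ
        + Real.log (Kpart d N β g μ) / (β * N))
      ≤ 1 / (β ^ 2 * N) * ∫ X, ‖fderiv ℝ (fun Y => Real.log (f Y / q Y)) X‖ ^ 2
        ∂(densMeasureN d N f) := by
  have : IsProbabilityMeasure (volume.withDensity fun X => ENNReal.ofReal (f X)) :=
    ‹IsProbabilityMeasure (densMeasureN d N f)›
  rw [hQ] at hLSI
  rw [modFreeEnergy_add_log_Kpart_div hg hβ.ne' hN hf.continuous.measurable hf_pos
    hq.continuous.measurable hq_pos hK hQ hH hF]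
  calc _ ≤ 4 / (β * CLS) * ((β * N)⁻¹ * (CLS / 4 *
          ∫ X, ‖fderiv ℝ (fun Y => Real.log (f Y / q Y)) X‖ ^ 2 ∂(densMeasureN d N f))) := by
        gcongr
        exact integral_log_div_le_of_logSobolev hf hq hf_pos hq_pos hLSI
    _ = _ := by field_simp

end ModulatedEnergy

theorem stmt_0_general (d N : ℕ) (hN : 1 ≤ N)
    (β CLS Cc : ℝ) (hβ : 0 < β) (hCLS : 0 < CLS)
    (g : EuclideanSpace ℝ (Fin d) → EuclideanSpace ℝ (Fin d) → ℝ)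
    (hg_meas : Measurable (Function.uncurry g))
    -- time-dependent probability densities `μ^t` on `ℝ^d` and `f_N^t` on `(ℝ^d)^N`:
    (μ : ℝ → EuclideanSpace ℝ (Fin d) → ℝ)
    (f : ℝ → (Fin N → EuclideanSpace ℝ (Fin d)) → ℝ)
    (hf_prob : ∀ t, 0 ≤ t → IsProbabilityMeasure (densMeasureN d N (f t)))
    (hf_pos : ∀ t, 0 ≤ t → ∀ X, 0 < f t X)
    (hf_C1 : ∀ t, 0 ≤ t → ContDiff ℝ 1 (f t))
    -- `K_{N,β}(μ^t) ∈ (0,∞)`: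
    (hK_pos : ∀ t, 0 ≤ t → 0 < Kpart d N β g (densMeasure d (μ t)))
    -- `Q_{N,β}(μ^t)` has a positive `C¹` Lebesgue density `q_N^t`:
    (q : ℝ → (Fin N → EuclideanSpace ℝ (Fin d)) → ℝ)
    (hq_pos : ∀ t, 0 ≤ t → ∀ X, 0 < q t X)
    (hq_C1 : ∀ t, 0 ≤ t → ContDiff ℝ 1 (q t))
    (hQ_eq : ∀ t, 0 ≤ t →
      modGibbs d N β g (densMeasure d (μ t)) = densMeasureN d N (q t))
    -- finiteness of the quantities appearing below:
    (hH_fin : ∀ t, 0 ≤ t → Integrable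
      (fun X => Real.log (((densMeasureN d N (f t)).rnDeriv
        (Measure.pi fun _ : Fin N => densMeasure d (μ t)) X).toReal))
      (densMeasureN d N (f t)))
    (hF_fin : ∀ t, 0 ≤ t →
      Integrable (modEnergy d N g (densMeasure d (μ t))) (densMeasureN d N (f t)))
    -- the auxiliary functions `a`, `b`, `k`:
    (a : ℝ → ℝ) (ha_cont : ContinuousOn a (Set.Ici 0))
    (b b' : ℝ → ℝ)
    (hb_deriv : ∀ t, 0 ≤ t → HasDerivAt b (b' t) t)
    (hb'_cont : ContinuousOn b' (Set.Ici 0))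
    (hk_cont : ContinuousOn
      (fun t => Real.log (Kpart d N β g (densMeasure d (μ t))) / (β * N)) (Set.Ici 0))
    -- `t ↦ E_N(f_N^t, μ^t)` is differentiable, with derivative `E'`:
    (E' : ℝ → ℝ)
    (hE_deriv : ∀ t, 0 ≤ t → HasDerivAt
      (fun τ => modFreeEnergy d N β g (densMeasureN d N (f τ)) (densMeasure d (μ τ)))
      (E' t) t)
    -- (i) the dissipation inequality for the modulated free energy:
    (h_i : ∀ t, 0 ≤ t →
      E' t ≤ -(1 / (β ^ 2 * N)) *
          (∫ X, ‖fderiv ℝ (fun Y => Real.log (f t Y / q t Y)) X‖ ^ 2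
            ∂(densMeasureN d N (f t)))
        + (Cc * a t / 2) *
          (modFreeEnergy d N β g (densMeasureN d N (f t)) (densMeasure d (μ t)) + b t))
    -- (ii) the logarithmic Sobolev inequality for `Q_{N,β}(μ^t)` at `φ = √(f_N^t/q_N^t)`:
    (h_ii : ∀ t, 0 ≤ t →
      ∫ X, Real.sqrt (f t X / q t X) ^ 2 *
          Real.log (Real.sqrt (f t X / q t X) ^ 2 /
            ∫ Y, Real.sqrt (f t Y / q t Y) ^ 2 ∂(modGibbs d N β g (densMeasure d (μ t))))
          ∂(modGibbs d N β g (densMeasure d (μ t)))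
        ≤ CLS * ∫ X, ‖fderiv ℝ (fun Y => Real.sqrt (f t Y / q t Y)) X‖ ^ 2
            ∂(modGibbs d N β g (densMeasure d (μ t)))) :
    -- conclusion: the Grönwall estimate on `𝓔_N^t = E_N(f_N^t, μ^t) + b(t)`:
    ∀ t, 0 ≤ t →
      modFreeEnergy d N β g (densMeasureN d N (f t)) (densMeasure d (μ t)) + b t
        ≤ Real.exp (-(4 * t) / (β * CLS) + ∫ τ in (0:ℝ)..t, Cc * a τ / 2) *
            (modFreeEnergy d N β g (densMeasureN d N (f 0)) (densMeasure d (μ 0)) + b 0)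
          + Real.exp (-(4 * t) / (β * CLS) + ∫ τ in (0:ℝ)..t, Cc * a τ / 2) *
            ∫ τ in (0:ℝ)..t,
              Real.exp ((4 * τ) / (β * CLS) - ∫ τ' in (0:ℝ)..τ, Cc * a τ' / 2) *
                (b' τ + (4 / (β * CLS)) *
                  (b τ - Real.log (Kpart d N β g (densMeasure d (μ τ))) / (β * N))) := by
  have hrate : ∀ s, 4 * s / (β * CLS) = 4 / (β * CLS) * s := fun s => by ring
  have hb_cont : ContinuousOn b (Set.Ici 0) := fun s hs =>
    (hb_deriv s hs).continuousAt.continuousWithinAt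
  intro t ht
  simp only [neg_div, hrate, ← mul_add]
  refine le_exp_of_hasDerivAt_le_neg_const_add (A := fun τ => Cc * a τ / 2)
    (c := fun τ => b' τ + 4 / (β * CLS) *
      (b τ - Real.log (Kpart d N β g (densMeasure d (μ τ))) / (β * N)))
    (y := fun τ => modFreeEnergy d N β g (densMeasureN d N (f τ)) (densMeasure d (μ τ)) + b τ)
    ((continuousOn_const.mul ha_cont).div_const 2)
    (hb'_cont.add (continuousOn_const.mul (hb_cont.sub hk_cont)))
    (fun s hs => (hE_deriv s hs).add (hb_deriv s hs)) (fun s hs => ?_) ht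
  have := hf_prob s hs
  have hdiss := four_div_mul_modFreeEnergy_add_le_of_logSobolev hg_meas hβ hCLS (by omega)
    ((hf_C1 s hs).differentiable one_ne_zero) (hf_pos s hs)
    ((hq_C1 s hs).differentiable one_ne_zero) (hq_pos s hs) (hK_pos s hs) (hQ_eq s hs)
    (hH_fin s hs) (hF_fin s hs) (h_ii s hs)
  linarith [h_i s hs]

/-- **Exponential decay of the modulated free energy under a uniform modulated logarithmic
Sobolev inequality** (main theorem). Given the modulated-free-energy dissipation
inequality (i) and the uniform LSI (ii) for the modulated Gibbs measures `Q_{N,β}(μ^t)`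
applied to `φ = √(f_N^t/q_N^t)`, the corrected modulated free energy
`𝓔_N^t = E_N(f_N^t, μ^t) + b(t)` satisfies the Grönwall estimate of Theorem 1.2. -/
theorem stmt_0 (d N : ℕ) (hd : 1 ≤ d) (hN : 1 ≤ N)
    (β CLS Cc : ℝ) (hβ : 0 < β) (hCLS : 0 < CLS) (hCc : 0 < Cc)
    (g : EuclideanSpace ℝ (Fin d) → EuclideanSpace ℝ (Fin d) → ℝ)
    (hg_symm : ∀ x y, g x y = g y x)
    (hg_meas : Measurable (Function.uncurry g))
    -- time-dependent probability densities `μ^t` on `ℝ^d` and `f_N^t` on `(ℝ^d)^N`: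
    (μ : ℝ → EuclideanSpace ℝ (Fin d) → ℝ)
    (f : ℝ → (Fin N → EuclideanSpace ℝ (Fin d)) → ℝ)
    (hμ_meas : ∀ t, 0 ≤ t → Measurable (μ t))
    (hμ_prob : ∀ t, 0 ≤ t → IsProbabilityMeasure (densMeasure d (μ t)))
    (hf_prob : ∀ t, 0 ≤ t → IsProbabilityMeasure (densMeasureN d N (f t)))
    (hf_pos : ∀ t, 0 ≤ t → ∀ X, 0 < f t X)
    (hf_C1 : ∀ t, 0 ≤ t → ContDiff ℝ 1 (f t))
    (hf_cont_t : ∀ X, ContinuousOn (fun t => f t X) (Set.Ici 0))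
    -- `K_{N,β}(μ^t) ∈ (0,∞)`:
    (hK_pos : ∀ t, 0 ≤ t → 0 < Kpart d N β g (densMeasure d (μ t)))
    (hK_int : ∀ t, 0 ≤ t →
      Integrable (fun X => Real.exp (-(β * N * modEnergy d N g (densMeasure d (μ t)) X)))
        (Measure.pi fun _ : Fin N => densMeasure d (μ t)))
    -- `Q_{N,β}(μ^t)` has a positive `C¹` Lebesgue density `q_N^t`:
    (q : ℝ → (Fin N → EuclideanSpace ℝ (Fin d)) → ℝ)
    (hq_pos : ∀ t, 0 ≤ t → ∀ X, 0 < q t X)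
    (hq_C1 : ∀ t, 0 ≤ t → ContDiff ℝ 1 (q t))
    (hQ_eq : ∀ t, 0 ≤ t →
      modGibbs d N β g (densMeasure d (μ t)) = densMeasureN d N (q t))
    -- finiteness of the quantities appearing below:
    (hH_fin : ∀ t, 0 ≤ t → Integrable
      (fun X => Real.log (((densMeasureN d N (f t)).rnDeriv
        (Measure.pi fun _ : Fin N => densMeasure d (μ t)) X).toReal))
      (densMeasureN d N (f t)))
    (hF_fin : ∀ t, 0 ≤ t →
      Integrable (modEnergy d N g (densMeasure d (μ t))) (densMeasureN d N (f t)))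
    (hFish_fin : ∀ t, 0 ≤ t →
      Integrable (fun X => ‖fderiv ℝ (fun Y => Real.log (f t Y / q t Y)) X‖ ^ 2)
        (densMeasureN d N (f t)))
    -- the auxiliary functions `a`, `b`, `k`:
    (a : ℝ → ℝ) (ha_cont : ContinuousOn a (Set.Ici 0)) (ha_nonneg : ∀ t, 0 ≤ t → 0 ≤ a t)
    (b b' : ℝ → ℝ) (hb_nonneg : ∀ t, 0 ≤ t → 0 ≤ b t)
    (hb_deriv : ∀ t, 0 ≤ t → HasDerivAt b (b' t) t)
    (hb'_cont : ContinuousOn b' (Set.Ici 0))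
    (hEb_nonneg : ∀ t, 0 ≤ t →
      0 ≤ modFreeEnergy d N β g (densMeasureN d N (f t)) (densMeasure d (μ t)) + b t)
    (hk_cont : ContinuousOn
      (fun t => Real.log (Kpart d N β g (densMeasure d (μ t))) / (β * N)) (Set.Ici 0))
    -- `t ↦ E_N(f_N^t, μ^t)` is differentiable, with derivative `E'`:
    (E' : ℝ → ℝ)
    (hE_deriv : ∀ t, 0 ≤ t → HasDerivAt
      (fun τ => modFreeEnergy d N β g (densMeasureN d N (f τ)) (densMeasure d (μ τ)))
      (E' t) t)
    -- (i) the dissipation inequality for the modulated free energy: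
    (h_i : ∀ t, 0 ≤ t →
      E' t ≤ -(1 / (β ^ 2 * N)) *
          (∫ X, ‖fderiv ℝ (fun Y => Real.log (f t Y / q t Y)) X‖ ^ 2
            ∂(densMeasureN d N (f t)))
        + (Cc * a t / 2) *
          (modFreeEnergy d N β g (densMeasureN d N (f t)) (densMeasure d (μ t)) + b t))
    -- (ii) the logarithmic Sobolev inequality for `Q_{N,β}(μ^t)` at `φ = √(f_N^t/q_N^t)`:
    (h_ii : ∀ t, 0 ≤ t →
      ∫ X, Real.sqrt (f t X / q t X) ^ 2 *
          Real.log (Real.sqrt (f t X / q t X) ^ 2 /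
            ∫ Y, Real.sqrt (f t Y / q t Y) ^ 2 ∂(modGibbs d N β g (densMeasure d (μ t))))
          ∂(modGibbs d N β g (densMeasure d (μ t)))
        ≤ CLS * ∫ X, ‖fderiv ℝ (fun Y => Real.sqrt (f t Y / q t Y)) X‖ ^ 2
            ∂(modGibbs d N β g (densMeasure d (μ t)))) :
    -- conclusion: the Grönwall estimate on `𝓔_N^t = E_N(f_N^t, μ^t) + b(t)`:
    ∀ t, 0 ≤ t →
      modFreeEnergy d N β g (densMeasureN d N (f t)) (densMeasure d (μ t)) + b t
        ≤ Real.exp (-(4 * t) / (β * CLS) + ∫ τ in (0:ℝ)..t, Cc * a τ / 2) *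
            (modFreeEnergy d N β g (densMeasureN d N (f 0)) (densMeasure d (μ 0)) + b 0)
          + Real.exp (-(4 * t) / (β * CLS) + ∫ τ in (0:ℝ)..t, Cc * a τ / 2) *
            ∫ τ in (0:ℝ)..t,
              Real.exp ((4 * τ) / (β * CLS) - ∫ τ' in (0:ℝ)..τ, Cc * a τ' / 2) *
                (b' τ + (4 / (β * CLS)) *
                  (b τ - Real.log (Kpart d N β g (densMeasure d (μ τ))) / (β * N))) :=
  stmt_0_general d N hN β CLS Cc hβ hCLS g hg_meas μ f hf_prob hf_pos hf_C1 hK_pos q hq_pos hq_C1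
    hQ_eq hH_fin hF_fin a ha_cont b b' hb_deriv hb'_cont hk_cont E' hE_deriv h_i h_ii
end
end

section
/- Let d ≥ 1, β > 0, let g : ℝ^d × ℝ^d → ℝ be symmetric and measurable, let V : ℝ^d → ℝ be measurable, and let μ_β be a probability density on ℝ^d such that g∗μ_β(x) := ∫ g(x, y) dμ_β(y) is finite for every x, such that g∗μ_β + V + (1/β) log μ_β = c_β everywhere on ℝ^d for some constant c_β, and such that ∬ |g| dμ_β ⊗ dμ_β, ∫ |V| dμ_β, and ∫ μ_β |log μ_β| are finite. Then μ_β > 0 everywhere, and for every N ≥ 1 and every X_N = (x_1, …, x_N) ∈ (ℝ^d)^N with pairwise distinct coordinates, the splitting formula 𝓗_N(X_N) = N 𝓔_β(μ_β) + N F_N(X_N, μ_β) − (1/β) Σ_{i=1}^N log μ_β(x_i) holds. -/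
open MeasureTheory

noncomputable section

/-- The `N`-particle energy `𝓗_N(X_N) = Σᵢ V(xᵢ) + (1/(2N)) Σ_{i≠j} g(xᵢ,xⱼ)`. -/
def HamN (d N : ℕ) (g : EuclideanSpace ℝ (Fin d) → EuclideanSpace ℝ (Fin d) → ℝ)
    (V : EuclideanSpace ℝ (Fin d) → ℝ) (X : Fin N → EuclideanSpace ℝ (Fin d)) : ℝ :=
  ∑ i : Fin N, V (X i)
    + (1 / (2 * (N : ℝ))) * ∑ i : Fin N, ∑ j ∈ Finset.univ.erase i, g (X i) (X j)

/-- The partition function `Z_{N,β}^V = ∫ exp(−β 𝓗_N) dX_N`. -/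
def Zpart (d N : ℕ) (β : ℝ) (g : EuclideanSpace ℝ (Fin d) → EuclideanSpace ℝ (Fin d) → ℝ)
    (V : EuclideanSpace ℝ (Fin d) → ℝ) : ℝ :=
  ∫ X : Fin N → EuclideanSpace ℝ (Fin d), Real.exp (-(β * HamN d N g V X)) ∂volume

/-- The Gibbs measure `P_{N,β}^V`, with density `exp(−β𝓗_N)/Z_{N,β}^V` with respect to
Lebesgue measure on `(ℝ^d)^N`. -/
def gibbs (d N : ℕ) (β : ℝ) (g : EuclideanSpace ℝ (Fin d) → EuclideanSpace ℝ (Fin d) → ℝ)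
    (V : EuclideanSpace ℝ (Fin d) → ℝ) : Measure (Fin N → EuclideanSpace ℝ (Fin d)) :=
  volume.withDensity fun X =>
    ENNReal.ofReal (Real.exp (-(β * HamN d N g V X)) / Zpart d N β g V)

/-- The mean-field free energy
`𝓔_β(μ) = (1/2) ∬ g dμ dμ + ∫ V dμ + (1/β) ∫ μ log μ` of a probability density `μ`. -/
def meanFE (d : ℕ) (β : ℝ) (g : EuclideanSpace ℝ (Fin d) → EuclideanSpace ℝ (Fin d) → ℝ)
    (V : EuclideanSpace ℝ (Fin d) → ℝ) (μ : EuclideanSpace ℝ (Fin d) → ℝ) : ℝ :=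
  (1 / 2) * (∫ x, ∫ y, g x y ∂(densMeasure d μ) ∂(densMeasure d μ))
    + (∫ x, V x ∂(densMeasure d μ))
    + (1 / β) * ∫ x, Real.log (μ x) ∂(densMeasure d μ)

/-- **Splitting of the energy around the thermal equilibrium measure.** Let `μ_β` be a
probability density with `g∗μ_β` finite everywhere, satisfying the characterization
`g∗μ_β + V + (1/β) log μ_β = c_β` (encoded in solved form
`μ_β(x) = exp(β(c_β − V(x) − g∗μ_β(x)))`, which expresses exactly that the identity holds
with `log μ_β(x)` finite), and with `∬|g| dμ_β dμ_β`, `∫|V| dμ_β`, `∫ μ_β |log μ_β|`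
finite. Then `μ_β > 0` everywhere, and for every `N ≥ 1` and every pairwise distinct
configuration `X_N`,
`𝓗_N(X_N) = N 𝓔_β(μ_β) + N F_N(X_N,μ_β) − (1/β) Σᵢ log μ_β(xᵢ)`. -/
theorem stmt_4 (d : ℕ) (hd : 1 ≤ d) (β : ℝ) (hβ : 0 < β)
    (g : EuclideanSpace ℝ (Fin d) → EuclideanSpace ℝ (Fin d) → ℝ)
    (hg_symm : ∀ x y, g x y = g y x)
    (hg_meas : Measurable (Function.uncurry g))
    (V : EuclideanSpace ℝ (Fin d) → ℝ) (hV_meas : Measurable V)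
    (μβ : EuclideanSpace ℝ (Fin d) → ℝ) (hμβ_meas : Measurable μβ)
    (hμβ_prob : IsProbabilityMeasure (densMeasure d μβ))
    -- `g∗μ_β(x)` is finite for every `x`:
    (hconv_int : ∀ x, Integrable (fun y => g x y) (densMeasure d μβ))
    (cβ : ℝ)
    -- the characterization `g∗μ_β + V + (1/β) log μ_β = c_β` everywhere:
    (hchar : ∀ x, μβ x = Real.exp (β * (cβ - V x - ∫ y, g x y ∂(densMeasure d μβ))))
    -- finiteness: `∬ |g| dμ_β dμ_β`, `∫ |V| dμ_β`, `∫ μ_β |log μ_β|`: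
    (hg_int : Integrable (Function.uncurry g) ((densMeasure d μβ).prod (densMeasure d μβ)))
    (hV_int : Integrable V (densMeasure d μβ))
    (hlog_int : Integrable (fun x => Real.log (μβ x)) (densMeasure d μβ)) :
    (∀ x, 0 < μβ x) ∧
      ∀ N : ℕ, 1 ≤ N → ∀ X : Fin N → EuclideanSpace ℝ (Fin d),
        (∀ i j, i ≠ j → X i ≠ X j) →
        HamN d N g V X
          = N * meanFE d β g V μβ + N * modEnergy d N g (densMeasure d μβ) X
            - (1 / β) * ∑ i : Fin N, Real.log (μβ (X i)) := by
  have hpos : ∀ x, 0 < μβ x := fun x => by rw [hchar x]; exact Real.exp_pos _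
  refine ⟨hpos, ?_⟩
  intro N hN X hX
  set μ := densMeasure d μβ with hμdef
  have hβ' : β ≠ 0 := ne_of_gt hβ
  have hVeq : ∀ x, V x = cβ - (1/β) * Real.log (μβ x) - ∫ y, g x y ∂μ := by
    intro x
    have hl : Real.log (μβ x) = β * (cβ - V x - ∫ y, g x y ∂μ) := by
      rw [hchar x, Real.log_exp]
    rw [hl]; field_simp; ring
  have hh_int : Integrable (fun x => ∫ y, g x y ∂μ) μ := by
    have := hg_int.integral_prod_left
    simpa [Function.uncurry] using this
  have hconst : Integrable (fun _ : EuclideanSpace ℝ (Fin d) => cβ) μ := integrable_const _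
  have hVint : ∫ x, V x ∂μ
      = cβ - (1/β) * (∫ x, Real.log (μβ x) ∂μ) - ∫ x, ∫ y, g x y ∂μ ∂μ := by
    rw [show (fun x => V x) = fun x => cβ - (1/β) * Real.log (μβ x) - ∫ y, g x y ∂μ from
      funext hVeq]
    have h1 : Integrable (fun x => cβ - 1/β * Real.log (μβ x)) μ := by
      exact hconst.sub (hlog_int.const_mul (1/β))
    rw [integral_sub h1 hh_int,
      integral_sub hconst (hlog_int.const_mul (1/β)), integral_const, integral_const_mul]
    simp
  have hsumV : ∑ i : Fin N, V (X i)
      = N * cβ - (1/β) * (∑ i : Fin N, Real.log (μβ (X i)))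
        - ∑ i : Fin N, ∫ y, g (X i) y ∂μ := by
    rw [Finset.sum_congr rfl (fun i _ => hVeq (X i))]
    simp [Finset.sum_sub_distrib, Finset.mul_sum]
  have hN0 : (N : ℝ) ≠ 0 := by
    exact Nat.cast_ne_zero.mpr (by omega)
  unfold HamN meanFE modEnergy
  rw [hsumV, hVint]
  field_simp
  ring
end
end

section
/- Let d ≥ 1, β > 0, let g : ℝ^d × ℝ^d → ℝ be symmetric and measurable, let V : ℝ^d → ℝ be measurable, and let μ_β be a probability density on ℝ^d such that g∗μ_β is finite everywhere, g∗μ_β + V + (1/β) log μ_β = c_β everywhere on ℝ^d for some constant c_β, and ∬ |g| dμ_β ⊗ dμ_β, ∫ |V| dμ_β, ∫ μ_β |log μ_β| are finite. Fix N ≥ 1 and assume Z_{N,β}^V ∈ (0, ∞). Then K_{N,β}(μ_β) ∈ (0, ∞), Z_{N,β}^V = K_{N,β}(μ_β) e^{−βN 𝓔_β(μ_β)}, and the Gibbs measure P_{N,β}^V coincides with the modulated Gibbs measure Q_{N,β}(μ_β) as probability measures on (ℝ^d)^N. -/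
open MeasureTheory

noncomputable section

open ENNReal in
lemma my_lintegral_pi_prod {α : Type*} [MeasurableSpace α] (μ : Measure α) [SigmaFinite μ] :
    ∀ (n : ℕ) (f : Fin n → α → ℝ≥0∞), (∀ i, Measurable (f i)) →
      ∫⁻ x : Fin n → α, ∏ i, f i (x i) ∂(Measure.pi fun _ => μ) = ∏ i, ∫⁻ x, f i x ∂μ := by
  intro n
  induction n with
  | zero => intro f _; simp
  | succ n ih =>
      intro f hf
      have h := (measurePreserving_piFinSuccAbove (fun _ : Fin (n+1) => μ) 0).symm
      rw [← h.lintegral_comp_emb (MeasurableEquiv.measurableEmbedding _)]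
      have hmeas : Measurable fun (y : Fin n → α) => ∏ i : Fin n, f i.succ (y i) :=
        Finset.measurable_prod _ fun i _ => (hf i.succ).comp (measurable_pi_apply i)
      calc ∫⁻ p : α × (Fin n → α), ∏ i, f i ((MeasurableEquiv.piFinSuccAbove (fun _ => α) 0).symm p i)
            ∂(μ.prod (Measure.pi fun _ => μ))
          = ∫⁻ p : α × (Fin n → α), f 0 p.1 * ∏ i : Fin n, f i.succ (p.2 i)
            ∂(μ.prod (Measure.pi fun _ => μ)) := by
            congr 1
            ext p
            rw [Fin.prod_univ_succ]
            simp [MeasurableEquiv.piFinSuccAbove_symm_apply, Fin.insertNthEquiv,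
              Fin.insertNth_zero, Fin.zero_succAbove]
        _ = (∫⁻ x, f 0 x ∂μ) * ∫⁻ y : Fin n → α, ∏ i : Fin n, f i.succ (y i)
            ∂(Measure.pi fun _ => μ) :=
            lintegral_prod_mul (hf 0).aemeasurable hmeas.aemeasurable
        _ = ∏ i, ∫⁻ x, f i x ∂μ := by
            rw [ih (fun i => f i.succ) (fun i => hf i.succ), Fin.prod_univ_succ]

open ENNReal in
lemma my_pi_withDensity {α : Type*} [MeasurableSpace α] (μ : Measure α) [SigmaFinite μ]
    (f : α → ℝ≥0∞) (hf : Measurable f) [SigmaFinite (μ.withDensity f)] (n : ℕ) :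
    Measure.pi (fun _ : Fin n => μ.withDensity f)
      = (Measure.pi fun _ : Fin n => μ).withDensity (fun x => ∏ i, f (x i)) := by
  refine Measure.pi_eq fun s hs => ?_
  rw [withDensity_apply _ (MeasurableSet.univ_pi hs),
    ← lintegral_indicator (MeasurableSet.univ_pi hs)]
  have hind : (Set.univ.pi s).indicator (fun x : Fin n → α => ∏ i, f (x i))
      = fun x => ∏ i, (s i).indicator f (x i) := by
    ext x
    by_cases hx : x ∈ Set.univ.pi s
    · rw [Set.indicator_of_mem hx]
      exact Finset.prod_congr rfl fun i _ =>
        (Set.indicator_of_mem (hx i (Set.mem_univ i)) f).symm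
    · rw [Set.indicator_of_notMem hx]
      have : ¬ ∀ i, x i ∈ s i := by simpa [Set.mem_pi] using hx
      push_neg at this
      obtain ⟨i, hi⟩ := this
      exact (Finset.prod_eq_zero (Finset.mem_univ i) (Set.indicator_of_notMem hi f)).symm
  rw [hind, my_lintegral_pi_prod μ n _ (fun i => hf.indicator (hs i))]
  exact Finset.prod_congr rfl fun i _ => by
    rw [lintegral_indicator (hs i), withDensity_apply _ (hs i)]

open scoped NNReal ENNReal in

lemma my_integral_withDensity {α : Type*} [MeasurableSpace α] (μ : Measure α) (p : α → ℝ)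
    (hp : Measurable p) (h0 : ∀ x, 0 ≤ p x) (h : α → ℝ) :
    ∫ x, h x ∂(μ.withDensity fun x => ENNReal.ofReal (p x)) = ∫ x, p x * h x ∂μ := by
  have hrw : (fun x => ENNReal.ofReal (p x)) = fun x => ((fun x => (p x).toNNReal) x : ℝ≥0∞) := rfl
  rw [hrw, integral_withDensity_eq_integral_smul (hp.real_toNNReal) h]
  congr 1
  funext x
  rw [NNReal.smul_def, Real.coe_toNNReal _ (h0 x), smul_eq_mul]

open scoped NNReal ENNReal in
lemma my_integrable_withDensity {α : Type*} [MeasurableSpace α] (μ : Measure α) (p : α → ℝ)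
    (hp : Measurable p) (h0 : ∀ x, 0 ≤ p x) (h : α → ℝ) :
    Integrable h (μ.withDensity fun x => ENNReal.ofReal (p x))
      ↔ Integrable (fun x => p x * h x) μ := by
  have hrw : (fun x => ENNReal.ofReal (p x)) = fun x => ((fun x => (p x).toNNReal) x : ℝ≥0∞) := rfl
  rw [hrw, integrable_withDensity_iff_integrable_smul (hp.real_toNNReal)]
  constructor <;> intro hh <;>
    · refine hh.congr (Filter.Eventually.of_forall fun x => ?_)
      simp only [NNReal.smul_def, Real.coe_toNNReal _ (h0 x), smul_eq_mul]

/-- **The Gibbs measure is the modulated Gibbs measure relative to the thermal equilibrium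
measure.** Under the hypotheses of the splitting formula, if moreover `Z_{N,β}^V ∈ (0,∞)`
(positivity plus integrability of the Boltzmann factor), then `K_{N,β}(μ_β) ∈ (0,∞)`,
`Z_{N,β}^V = K_{N,β}(μ_β) e^{−βN 𝓔_β(μ_β)}`, and `P_{N,β}^V = Q_{N,β}(μ_β)` as measures. -/
theorem stmt_5 (d : ℕ) (hd : 1 ≤ d) (β : ℝ) (hβ : 0 < β)
    (g : EuclideanSpace ℝ (Fin d) → EuclideanSpace ℝ (Fin d) → ℝ)
    (hg_symm : ∀ x y, g x y = g y x)
    (hg_meas : Measurable (Function.uncurry g))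
    (V : EuclideanSpace ℝ (Fin d) → ℝ) (hV_meas : Measurable V)
    (μβ : EuclideanSpace ℝ (Fin d) → ℝ) (hμβ_meas : Measurable μβ)
    (hμβ_prob : IsProbabilityMeasure (densMeasure d μβ))
    -- `g∗μ_β(x)` is finite for every `x`:
    (hconv_int : ∀ x, Integrable (fun y => g x y) (densMeasure d μβ))
    (cβ : ℝ)
    -- the characterization `g∗μ_β + V + (1/β) log μ_β = c_β` everywhere (solved form):
    (hchar : ∀ x, μβ x = Real.exp (β * (cβ - V x - ∫ y, g x y ∂(densMeasure d μβ))))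
    -- finiteness: `∬ |g| dμ_β dμ_β`, `∫ |V| dμ_β`, `∫ μ_β |log μ_β|`:
    (hg_int : Integrable (Function.uncurry g) ((densMeasure d μβ).prod (densMeasure d μβ)))
    (hV_int : Integrable V (densMeasure d μβ))
    (hlog_int : Integrable (fun x => Real.log (μβ x)) (densMeasure d μβ))
    (N : ℕ) (hN : 1 ≤ N)
    -- `Z_{N,β}^V ∈ (0,∞)`:
    (hZ_pos : 0 < Zpart d N β g V)
    (hZ_int : Integrable (fun X => Real.exp (-(β * HamN d N g V X)))
      (volume : Measure (Fin N → EuclideanSpace ℝ (Fin d)))) :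
    (0 < Kpart d N β g (densMeasure d μβ) ∧
      Integrable (fun X => Real.exp (-(β * N * modEnergy d N g (densMeasure d μβ) X)))
        (Measure.pi fun _ : Fin N => densMeasure d μβ)) ∧
    Zpart d N β g V
      = Kpart d N β g (densMeasure d μβ) * Real.exp (-(β * N * meanFE d β g V μβ)) ∧
    gibbs d N β g V = modGibbs d N β g (densMeasure d μβ) := by
  haveI := hμβ_prob
  have hNpos : (0:ℝ) < (N:ℝ) := by exact_mod_cast Nat.lt_of_lt_of_le Nat.zero_lt_one hN
  have hNne : (N:ℝ) ≠ 0 := ne_of_gt hNpos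
  have hμpos : ∀ x, 0 < μβ x := fun x => by rw [hchar x]; exact Real.exp_pos _
  -- the consequence of the characterization
  have hVeq : ∀ x, V x = cβ - (∫ y, g x y ∂(densMeasure d μβ)) - (1/β) * Real.log (μβ x) := by
    intro x
    have hlog : Real.log (μβ x) = β * (cβ - V x - ∫ y, g x y ∂(densMeasure d μβ)) := by
      rw [hchar x, Real.log_exp]
    field_simp at hlog ⊢
    linarith
  -- integrability of the convolution
  have hconv_intg : Integrable (fun x => ∫ y, g x y ∂(densMeasure d μβ)) (densMeasure d μβ) := by
    have heq : (fun x => ∫ y, g x y ∂(densMeasure d μβ)) = fun x => cβ - V x - (1/β) * Real.log (μβ x) := by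
      funext x; have := hVeq x; linarith
    rw [heq]
    exact ((integrable_const cβ).sub hV_int).sub (hlog_int.const_mul _)
  -- value of ∫ V
  have hVint_eq : ∫ x, V x ∂(densMeasure d μβ)
      = cβ - (∫ x, ∫ y, g x y ∂(densMeasure d μβ) ∂(densMeasure d μβ)) - (1/β) * ∫ x, Real.log (μβ x) ∂(densMeasure d μβ) := by
    calc ∫ x, V x ∂(densMeasure d μβ) = ∫ x, (cβ - (∫ y, g x y ∂(densMeasure d μβ)) - (1/β) * Real.log (μβ x)) ∂(densMeasure d μβ) :=
          integral_congr_ae (Filter.Eventually.of_forall fun x => hVeq x)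
      _ = _ := by
          have h1 : Integrable (fun x => cβ - ∫ y, g x y ∂(densMeasure d μβ)) (densMeasure d μβ) :=
            (integrable_const cβ).sub hconv_intg
          have h2 : Integrable (fun x => (1/β) * Real.log (μβ x)) (densMeasure d μβ) :=
            hlog_int.const_mul _
          rw [integral_sub h1 h2, integral_sub (integrable_const cβ) hconv_intg,
            integral_const, integral_const_mul]
          simp
  -- the free energy is cβ - D/2
  have hFE : meanFE d β g V μβ = cβ - (∫ x, ∫ y, g x y ∂(densMeasure d μβ) ∂(densMeasure d μβ)) / 2 := by
    unfold meanFE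
    rw [hVint_eq]
    ring
  -- the key pointwise exponent identity
  have hsumV : ∀ X : Fin N → EuclideanSpace ℝ (Fin d),
      ∑ i, V (X i) = (N:ℝ) * cβ - (∑ i, ∫ y, g (X i) y ∂(densMeasure d μβ))
        - (1/β) * ∑ i, Real.log (μβ (X i)) := by
    intro X
    calc ∑ i, V (X i)
        = ∑ i, (cβ - (∫ y, g (X i) y ∂(densMeasure d μβ)) - (1/β) * Real.log (μβ (X i))) :=
          Finset.sum_congr rfl fun i _ => hVeq (X i)
      _ = _ := by
          rw [Finset.sum_sub_distrib, Finset.sum_sub_distrib, Finset.sum_const,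
            Finset.card_univ, Fintype.card_fin, ← Finset.mul_sum]
          push_cast
          ring
  have hkey : ∀ X : Fin N → EuclideanSpace ℝ (Fin d),
      -(β * HamN d N g V X)
        = -(β * (N:ℝ) * modEnergy d N g (densMeasure d μβ) X)
          + (-(β * (N:ℝ) * meanFE d β g V μβ) + ∑ i, Real.log (μβ (X i))) := by
    intro X
    rw [hFE]
    unfold HamN modEnergy
    rw [hsumV X]
    field_simp
    ring
  have hkeyexp : ∀ X : Fin N → EuclideanSpace ℝ (Fin d),
      Real.exp (-(β * HamN d N g V X))
        = (∏ i, μβ (X i)) * Real.exp (-(β * (N:ℝ) * modEnergy d N g (densMeasure d μβ) X))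
          * Real.exp (-(β * (N:ℝ) * meanFE d β g V μβ)) := by
    intro X
    have hP : Real.exp (∑ i, Real.log (μβ (X i))) = ∏ i, μβ (X i) := by
      rw [Real.exp_sum]
      exact Finset.prod_congr rfl fun i _ => Real.exp_log (hμpos _)
    rw [hkey X, Real.exp_add, Real.exp_add, hP]
    ring
  -- the product measure identity
  haveI : IsProbabilityMeasure
      ((volume : Measure (EuclideanSpace ℝ (Fin d))).withDensity
        fun x => ENNReal.ofReal (μβ x)) := hμβ_prob
  have hpiν : (Measure.pi fun _ : Fin N => (densMeasure d μβ))
      = volume.withDensity fun X : Fin N → EuclideanSpace ℝ (Fin d) =>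
          ENNReal.ofReal (∏ i, μβ (X i)) := by
    calc (Measure.pi fun _ : Fin N => (densMeasure d μβ))
        = Measure.pi (fun _ : Fin N =>
            volume.withDensity fun x => ENNReal.ofReal (μβ x)) := rfl
      _ = (Measure.pi fun _ : Fin N => (volume : Measure (EuclideanSpace ℝ (Fin d)))).withDensity
            (fun X => ∏ i, ENNReal.ofReal (μβ (X i))) :=
          my_pi_withDensity volume _ hμβ_meas.ennreal_ofReal N
      _ = _ := by
          rw [← volume_pi]
          congr 1
          funext X
          rw [ENNReal.ofReal_prod_of_nonneg (fun i _ => (hμpos (X i)).le)]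
  -- change of variables for integrals against the product measure
  have hPmeasR : Measurable fun X : Fin N → EuclideanSpace ℝ (Fin d) => ∏ i, μβ (X i) :=
    Finset.measurable_prod _ fun i _ => hμβ_meas.comp (measurable_pi_apply i)
  have hPnn : ∀ X : Fin N → EuclideanSpace ℝ (Fin d), 0 ≤ ∏ i, μβ (X i) :=
    fun X => Finset.prod_nonneg fun i _ => (hμpos (X i)).le
  have hchg : ∀ h : (Fin N → EuclideanSpace ℝ (Fin d)) → ℝ,
      ∫ X, h X ∂(Measure.pi fun _ : Fin N => (densMeasure d μβ))
        = ∫ X, (∏ i, μβ (X i)) * h X ∂volume := by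
    intro h
    rw [hpiν]
    exact my_integral_withDensity volume _ hPmeasR hPnn h
  -- Z = K * exp(-βN E)
  have hK2 : Kpart d N β g (densMeasure d μβ)
      = ∫ X, (∏ i, μβ (X i)) * Real.exp (-(β * (N:ℝ) * modEnergy d N g (densMeasure d μβ) X)) ∂volume := by
    unfold Kpart
    exact hchg _
  have hZK : Zpart d N β g V
      = Kpart d N β g (densMeasure d μβ) * Real.exp (-(β * (N:ℝ) * meanFE d β g V μβ)) := by
    unfold Zpart
    calc ∫ X, Real.exp (-(β * HamN d N g V X)) ∂volume
        = ∫ X : Fin N → EuclideanSpace ℝ (Fin d),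
            ((∏ i, μβ (X i)) * Real.exp (-(β * (N:ℝ) * modEnergy d N g (densMeasure d μβ) X)))
              * Real.exp (-(β * (N:ℝ) * meanFE d β g V μβ)) ∂volume := by
          congr 1; funext X; rw [hkeyexp X]
      _ = (∫ X : Fin N → EuclideanSpace ℝ (Fin d),
            (∏ i, μβ (X i)) * Real.exp (-(β * (N:ℝ) * modEnergy d N g (densMeasure d μβ) X)) ∂volume)
              * Real.exp (-(β * (N:ℝ) * meanFE d β g V μβ)) :=
          integral_mul_const _ _
      _ = _ := by rw [← hK2]
  have hC0pos : 0 < Real.exp (-(β * (N:ℝ) * meanFE d β g V μβ)) := Real.exp_pos _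
  have hKpos : 0 < Kpart d N β g (densMeasure d μβ) := by
    rw [hZK] at hZ_pos
    nlinarith
  -- integrability
  have hint : Integrable (fun X => Real.exp (-(β * (N:ℝ) * modEnergy d N g (densMeasure d μβ) X)))
      (Measure.pi fun _ : Fin N => (densMeasure d μβ)) := by
    rw [hpiν, my_integrable_withDensity volume _ hPmeasR hPnn _]
    have heq : (fun X : Fin N → EuclideanSpace ℝ (Fin d) =>
        (∏ i, μβ (X i)) * Real.exp (-(β * (N:ℝ) * modEnergy d N g (densMeasure d μβ) X)))
        = fun X => Real.exp (-(β * HamN d N g V X))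
            / Real.exp (-(β * (N:ℝ) * meanFE d β g V μβ)) := by
      funext X
      rw [hkeyexp X]
      field_simp
    rw [heq]
    exact hZ_int.div_const _
  refine ⟨⟨hKpos, hint⟩, hZK, ?_⟩
  -- equality of measures
  have hgij : ∀ i j : Fin N, Measurable fun X : Fin N → EuclideanSpace ℝ (Fin d) =>
      g (X i) (X j) := by
    intro i j
    have h1 : Measurable fun X : Fin N → EuclideanSpace ℝ (Fin d) =>
        ((X i, X j) : EuclideanSpace ℝ (Fin d) × EuclideanSpace ℝ (Fin d)) :=
      (measurable_pi_apply i).prodMk (measurable_pi_apply j)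
    exact hg_meas.comp h1
  have hF_meas : Measurable fun X : Fin N → EuclideanSpace ℝ (Fin d) =>
      modEnergy d N g (densMeasure d μβ) X := by
    unfold modEnergy
    have hconvf : Measurable fun x : EuclideanSpace ℝ (Fin d) => ∫ y, g x y ∂(densMeasure d μβ) := by
      have heq : (fun x : EuclideanSpace ℝ (Fin d) => ∫ y, g x y ∂(densMeasure d μβ))
          = fun x => cβ - V x - (1/β) * Real.log (μβ x) := by
        funext x; have := hVeq x; linarith
      rw [heq]
      exact (measurable_const.sub hV_meas).sub
        ((Real.measurable_log.comp hμβ_meas).const_mul _)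
    refine Measurable.add (Measurable.sub ?_ ?_) measurable_const
    · exact measurable_const.mul (Finset.measurable_sum _ fun i _ =>
        Finset.measurable_sum _ fun j _ =>
          hgij i j)
    · exact measurable_const.mul (Finset.measurable_sum _ fun i _ =>
        hconvf.comp (measurable_pi_apply i))
  have hP_meas : Measurable fun X : Fin N → EuclideanSpace ℝ (Fin d) =>
      ENNReal.ofReal (∏ i, μβ (X i)) :=
    (Finset.measurable_prod _ fun i _ => hμβ_meas.comp (measurable_pi_apply i)).ennreal_ofReal
  have hG_meas : Measurable fun X : Fin N → EuclideanSpace ℝ (Fin d) =>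
      ENNReal.ofReal (Real.exp (-(β * (N:ℝ) * modEnergy d N g (densMeasure d μβ) X)) / Kpart d N β g (densMeasure d μβ)) :=
    ((Real.measurable_exp.comp ((measurable_const.mul hF_meas).neg)).div_const _).ennreal_ofReal
  unfold gibbs modGibbs
  rw [hpiν, ← withDensity_mul _ hP_meas hG_meas]
  congr 1
  funext X
  rw [Pi.mul_apply, ← ENNReal.ofReal_mul (Finset.prod_nonneg fun i _ => (hμpos (X i)).le)]
  congr 1
  rw [hZK, hkeyexp X]
  field_simp
end
end

section
/- Let d ≥ 1, β > 0, let g : ℝ^d × ℝ^d → ℝ be symmetric and measurable, let V : ℝ^d → ℝ be measurable, and let μ_β be a probability density on ℝ^d such that g∗μ_β is finite everywhere, g∗μ_β + V + (1/β) log μ_β = c_β everywhere for some constant c_β, and ∬ |g| dμ_β ⊗ dμ_β, ∫ |V| dμ_β, ∫ μ_β |log μ_β| are finite. Let μ be a probability density on ℝ^d with ∬ |g| d(μ + μ_β) ⊗ d(μ + μ_β) < ∞, ∫ |V| dμ < ∞, ∫ μ |log μ| < ∞, ∫ μ_β |log μ_β| < ∞, μ > 0 μ-almost everywhere, and ∫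 |log(μ/μ_β)| dμ < ∞. Assume Z_{N,β}^V ∈ (0, ∞) for every N ≥ 1 and that (1/N) log K_{N,β}(μ_β) → 0 as N → ∞. Then lim_{N→∞} H_N( μ^{⊗N} | P_{N,β}^V ) = β ( 𝓔_β(μ) − 𝓔_β(μ_β) ). -/
/-!
Both `μ^{⊗N}` and `P_{N,β}^V` have densities with respect to Lebesgue measure, so
`log (dμ^{⊗N}/dP_{N,β}^V) = Σᵢ log μ(xᵢ) + β 𝓗_N + log Z_{N,β}^V`. Integrating against the
i.i.d. measure `μ^{⊗N}`, where every pair `(xᵢ, xⱼ)` with `i ≠ j` has law `μ ⊗ μ`, gives exactly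
`H_N = β 𝓔_β(μ) - β ∬ g dμ dμ / (2N) + (log Z_{N,β}^V) / N`.
The Gibbs relation `μ_β = exp(β (c_β - V - g∗μ_β))` turns `∏ᵢ μ_β(xᵢ) · exp(-βN F_N(X_N, μ_β))`
into `exp(Nβ 𝓔_β(μ_β)) · exp(-β 𝓗_N)`, so `K_{N,β}(μ_β) = exp(Nβ 𝓔_β(μ_β)) Z_{N,β}^V`, and the
hypothesis `(1/N) log K_{N,β}(μ_β) → 0` concludes.
-/

open MeasureTheory

noncomputable section

open scoped ENNReal

namespace MeasureTheory

variable {ι α : Type*} [Fintype ι] [MeasurableSpace α]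

theorem lintegral_fin_nat_prod_eq_prod {n : ℕ} {μ : Fin n → Measure α} [∀ i, SigmaFinite (μ i)]
    {f : Fin n → α → ℝ≥0∞} (hf : ∀ i, Measurable (f i)) :
    ∫⁻ x, ∏ i, f i (x i) ∂Measure.pi μ = ∏ i, ∫⁻ x, f i x ∂μ i := by
  induction n with
  | zero => simp
  | succ n ih =>
      calc
        _ = ∫⁻ x : α × (Fin n → α), f 0 x.1 * ∏ i : Fin n, f i.succ (x.2 i)
              ∂(μ 0).prod (Measure.pi fun i : Fin n ↦ μ i.succ) := by
          rw [← (measurePreserving_piFinSuccAbove μ 0).symm.lintegral_comp_emb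
            (MeasurableEquiv.measurableEmbedding _)]
          simp [Fin.prod_univ_succ, MeasurableEquiv.piFinSuccAbove_symm_apply, Fin.insertNthEquiv]
        _ = (∫⁻ x, f 0 x ∂μ 0) * ∏ i : Fin n, ∫⁻ x, f i.succ x ∂μ i.succ := by
          rw [← ih fun i ↦ hf i.succ]
          exact lintegral_prod_mul (hf 0).aemeasurable (Finset.measurable_prod _
            fun (i : Fin n) _ ↦ (hf i.succ).comp (measurable_pi_apply i)).aemeasurable
        _ = ∏ i, ∫⁻ x, f i x ∂μ i := (Fin.prod_univ_succ fun i ↦ ∫⁻ x, f i x ∂μ i).symm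

theorem lintegral_fintype_prod_eq_prod {μ : ι → Measure α} [∀ i, SigmaFinite (μ i)]
    {f : ι → α → ℝ≥0∞} (hf : ∀ i, Measurable (f i)) :
    ∫⁻ x, ∏ i, f i (x i) ∂Measure.pi μ = ∏ i, ∫⁻ x, f i x ∂μ i := by
  let e := (Fintype.equivFin ι).symm
  rw [← (measurePreserving_piCongrLeft _ e).lintegral_comp_emb
    (MeasurableEquiv.measurableEmbedding _)]
  simp_rw [← e.prod_comp, MeasurableEquiv.coe_piCongrLeft, Equiv.piCongrLeft_apply_apply]
  exact lintegral_fin_nat_prod_eq_prod fun i ↦ hf (e i)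

theorem Measure.pi_withDensity {μ : ι → Measure α} [∀ i, SigmaFinite (μ i)]
    {f : ι → α → ℝ≥0∞} (hf : ∀ i, Measurable (f i))
    [∀ i, SigmaFinite ((μ i).withDensity (f i))] :
    Measure.pi (fun i ↦ (μ i).withDensity (f i))
      = (Measure.pi μ).withDensity fun x ↦ ∏ i, f i (x i) := by
  refine Measure.pi_eq fun s hs ↦ ?_
  classical
  rw [withDensity_apply _ (.univ_pi hs), ← lintegral_indicator (.univ_pi hs)]
  have : (Set.univ.pi s).indicator (fun x ↦ ∏ i, f i (x i))
      = fun x ↦ ∏ i, (s i).indicator (f i) (x i) := by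
    ext x
    simp [Set.indicator, Finset.prod_ite_zero]
  rw [this, lintegral_fintype_prod_eq_prod fun i ↦ (hf i).indicator (hs i)]
  simp_rw [withDensity_apply _ (hs _), lintegral_indicator (hs _)]

theorem measurePreserving_eval_pair {μ : ι → Measure α} [∀ i, IsProbabilityMeasure (μ i)]
    {i j : ι} (hij : i ≠ j) :
    MeasurePreserving (fun x ↦ (x i, x j)) (Measure.pi μ) ((μ i).prod (μ j)) := by
  refine ⟨by fun_prop, ?_⟩
  have hindep : ProbabilityTheory.IndepFun (fun x : ι → α ↦ x i) (fun x ↦ x j) (Measure.pi μ) :=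
    (ProbabilityTheory.iIndepFun_pi (X := fun _ ↦ id) fun _ ↦ aemeasurable_id).indepFun hij
  rw [(ProbabilityTheory.indepFun_iff_map_prod_eq_prod_map_map
    (measurable_pi_apply i).aemeasurable (measurable_pi_apply j).aemeasurable).1 hindep]
  exact congrArg₂ _ (measurePreserving_eval μ i).map_eq (measurePreserving_eval μ j).map_eq

theorem integrable_comp_eval_pair {μ : ι → Measure α} [∀ i, IsProbabilityMeasure (μ i)]
    {i j : ι} (hij : i ≠ j) {G : α → α → ℝ}
    (hG : Integrable (Function.uncurry G) ((μ i).prod (μ j))) :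
    Integrable (fun x ↦ G (x i) (x j)) (Measure.pi μ) :=
  (measurePreserving_eval_pair hij).integrable_comp_of_integrable (g := Function.uncurry G) hG

theorem integral_comp_eval_pair {μ : ι → Measure α} [∀ i, IsProbabilityMeasure (μ i)]
    {i j : ι} (hij : i ≠ j) {G : α → α → ℝ}
    (hG : Integrable (Function.uncurry G) ((μ i).prod (μ j))) :
    ∫ x, G (x i) (x j) ∂Measure.pi μ = ∫ x, ∫ y, G x y ∂μ j ∂μ i := by
  have hmp := measurePreserving_eval_pair (μ := μ) hij
  calc ∫ x, G (x i) (x j) ∂Measure.pi μ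
      = ∫ z, Function.uncurry G z ∂(Measure.pi μ).map fun x ↦ (x i, x j) :=
        (integral_map hmp.measurable.aemeasurable (hmp.map_eq ▸ hG.aestronglyMeasurable)).symm
    _ = ∫ x, ∫ y, G x y ∂μ j ∂μ i := by rw [hmp.map_eq, integral_prod _ hG]; rfl

section IidSums

variable {μ : Measure α} [IsProbabilityMeasure μ]

theorem integrable_sum_comp_eval {F : α → ℝ} (hF : Integrable F μ) :
    Integrable (fun x ↦ ∑ i, F (x i)) (Measure.pi fun _ : ι ↦ μ) :=
  integrable_finsetSum _ fun _ _ ↦ integrable_comp_eval hF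

theorem integral_sum_comp_eval {F : α → ℝ} (hF : Integrable F μ) :
    ∫ x, ∑ i, F (x i) ∂Measure.pi (fun _ : ι ↦ μ) = Fintype.card ι * ∫ y, F y ∂μ := by
  rw [integral_finsetSum _ fun i _ ↦ integrable_comp_eval hF]
  simp [integral_comp_eval (μ := fun _ : ι ↦ μ) hF.aestronglyMeasurable]

variable [DecidableEq ι] {G : α → α → ℝ} (hG : Integrable (Function.uncurry G) (μ.prod μ))
include hG

theorem integrable_sum_offDiag :
    Integrable (fun x ↦ ∑ i, ∑ j ∈ Finset.univ.erase i, G (x i) (x j))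
      (Measure.pi fun _ : ι ↦ μ) :=
  integrable_finsetSum _ fun _ _ ↦ integrable_finsetSum _ fun _ hj ↦
    integrable_comp_eval_pair (Finset.ne_of_mem_erase hj).symm hG

theorem integral_sum_offDiag :
    ∫ x, ∑ i, ∑ j ∈ Finset.univ.erase i, G (x i) (x j) ∂Measure.pi (fun _ : ι ↦ μ)
      = Fintype.card ι * (Fintype.card ι - 1) * ∫ x, ∫ y, G x y ∂μ ∂μ := by
  have hrow : ∀ i : ι, ∫ x, ∑ j ∈ Finset.univ.erase i, G (x i) (x j) ∂Measure.pi (fun _ : ι ↦ μ)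
      = (Fintype.card ι - 1) * ∫ x, ∫ y, G x y ∂μ ∂μ := by
    intro i
    have hne : ∀ j ∈ Finset.univ.erase i, i ≠ j := fun j hj ↦ (Finset.ne_of_mem_erase hj).symm
    rw [integral_finsetSum _ fun j hj ↦ integrable_comp_eval_pair (hne j hj) hG,
      Finset.sum_congr rfl fun j hj ↦ integral_comp_eval_pair (hne j hj) hG]
    simp [Finset.card_erase_of_mem, Nat.cast_sub (Fintype.card_pos_iff.2 ⟨i⟩)]
  rw [integral_finsetSum _ fun _ _ ↦ integrable_finsetSum _ fun _ hj ↦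
      integrable_comp_eval_pair (Finset.ne_of_mem_erase hj).symm hG,
    Finset.sum_congr rfl fun i _ ↦ hrow i]
  simp [mul_assoc]

end IidSums

end MeasureTheory

open Real

section MeanField

instance sigmaFinite_densMeasure (d : ℕ) (f : EuclideanSpace ℝ (Fin d) → ℝ) :
    SigmaFinite (densMeasure d f) := by
  unfold densMeasure
  infer_instance

variable {d N : ℕ} {β : ℝ} {g : EuclideanSpace ℝ (Fin d) → EuclideanSpace ℝ (Fin d) → ℝ}
  {V : EuclideanSpace ℝ (Fin d) → ℝ}

theorem measurable_HamN (hg : Measurable (Function.uncurry g)) (hV : Measurable V) :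
    Measurable (HamN d N g V) := by
  have hpair : ∀ i j : Fin N, Measurable fun X : Fin N → EuclideanSpace ℝ (Fin d) ↦ g (X i) (X j) :=
    fun i j ↦ hg.comp (f := fun X : Fin N → EuclideanSpace ℝ (Fin d) ↦ (X i, X j)) (by fun_prop)
  unfold HamN
  fun_prop

theorem integrable_HamN_pi {ρ : Measure (EuclideanSpace ℝ (Fin d))} [IsProbabilityMeasure ρ]
    (hV : Integrable V ρ) (hg : Integrable (Function.uncurry g) (ρ.prod ρ)) :
    Integrable (HamN d N g V) (Measure.pi fun _ ↦ ρ) :=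
  (integrable_sum_comp_eval hV).add ((integrable_sum_offDiag hg).const_mul _)

theorem integral_HamN_pi {ρ : Measure (EuclideanSpace ℝ (Fin d))} [IsProbabilityMeasure ρ]
    (hN : N ≠ 0) (hV : Integrable V ρ) (hg : Integrable (Function.uncurry g) (ρ.prod ρ)) :
    ∫ X, HamN d N g V X ∂Measure.pi (fun _ ↦ ρ)
      = N * ∫ x, V x ∂ρ + (N - 1) / 2 * ∫ x, ∫ y, g x y ∂ρ ∂ρ := by
  unfold HamN
  rw [integral_add (integrable_sum_comp_eval hV) ((integrable_sum_offDiag hg).const_mul _),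
    integral_const_mul, integral_sum_comp_eval hV, integral_sum_offDiag hg]
  simp only [Fintype.card_fin]
  field_simp

theorem pi_densMeasure {f : EuclideanSpace ℝ (Fin d) → ℝ} (hf : Measurable f) :
    Measure.pi (fun _ : Fin N ↦ densMeasure d f)
      = volume.withDensity fun X ↦ ∏ i, ENNReal.ofReal (f (X i)) := by
  rw [volume_pi]
  exact Measure.pi_withDensity fun _ ↦ hf.ennreal_ofReal

theorem prod_mul_exp_neg_modEnergy {ν : Measure (EuclideanSpace ℝ (Fin d))}
    {f : EuclideanSpace ℝ (Fin d) → ℝ} {c : ℝ}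
    (hf : ∀ x, f x = exp (β * (c - V x - ∫ y, g x y ∂ν))) (hN : N ≠ 0)
    (X : Fin N → EuclideanSpace ℝ (Fin d)) :
    (∏ i, f (X i)) * exp (-(β * N * modEnergy d N g ν X))
      = exp (N * β * (c - (∫ x, ∫ y, g x y ∂ν ∂ν) / 2)) * exp (-(β * HamN d N g V X)) := by
  simp_rw [hf, ← exp_sum, ← exp_add]
  congr 1
  unfold modEnergy HamN
  simp only [mul_sub, Finset.sum_sub_distrib, Finset.sum_const, Finset.card_univ,
    Fintype.card_fin, nsmul_eq_mul, ← Finset.mul_sum]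
  field_simp
  ring

theorem Kpart_eq_exp_mul_Zpart {μβ : EuclideanSpace ℝ (Fin d) → ℝ} (hμβ : Measurable μβ) {c : ℝ}
    (hchar : ∀ x, μβ x = exp (β * (c - V x - ∫ y, g x y ∂densMeasure d μβ))) (hN : N ≠ 0) :
    Kpart d N β g (densMeasure d μβ)
      = exp (N * β * (c - (∫ x, ∫ y, g x y ∂densMeasure d μβ ∂densMeasure d μβ) / 2))
        * Zpart d N β g V := by
  have hpos : ∀ x, 0 < μβ x := fun x ↦ hchar x ▸ exp_pos _
  unfold Kpart Zpart
  rw [pi_densMeasure hμβ, integral_withDensity_eq_integral_toReal_smul (by fun_prop)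
      (.of_forall fun _ ↦ ENNReal.prod_lt_top fun _ _ ↦ ENNReal.ofReal_lt_top),
    ← integral_const_mul]
  congr 1 with X
  rw [ENNReal.toReal_prod, smul_eq_mul, ← prod_mul_exp_neg_modEnergy hchar hN]
  simp [(hpos _).le]

theorem rnDeriv_pi_gibbs {μ : EuclideanSpace ℝ (Fin d) → ℝ} (hμ : Measurable μ)
    (hg : Measurable (Function.uncurry g)) (hV : Measurable V) (hZ : 0 < Zpart d N β g V) :
    (Measure.pi fun _ ↦ densMeasure d μ).rnDeriv (gibbs d N β g V)
      =ᵐ[Measure.pi fun _ ↦ densMeasure d μ] fun X ↦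
        (ENNReal.ofReal (exp (-(β * HamN d N g V X)) / Zpart d N β g V))⁻¹
          * ∏ i, ENNReal.ofReal (μ (X i)) := by
  have hac : Measure.pi (fun _ : Fin N ↦ densMeasure d μ) ≪ volume := by
    rw [pi_densMeasure hμ]
    exact withDensity_absolutelyContinuous _ _
  have hdens : (Measure.pi fun _ : Fin N ↦ densMeasure d μ).rnDeriv volume
      =ᵐ[volume] fun X ↦ ∏ i, ENNReal.ofReal (μ (X i)) := by
    rw [pi_densMeasure hμ]
    exact Measure.rnDeriv_withDensity _ (by fun_prop)
  have hHam := measurable_HamN (N := N) hg hV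
  filter_upwards [hac.ae_le (Measure.rnDeriv_withDensity_right
      (Measure.pi fun _ : Fin N ↦ densMeasure d μ) volume
      (f := fun X ↦ ENNReal.ofReal (exp (-(β * HamN d N g V X)) / Zpart d N β g V))
      (by fun_prop)
      (.of_forall fun _ ↦ (ENNReal.ofReal_pos.mpr (div_pos (exp_pos _) hZ)).ne')
      (.of_forall fun _ ↦ ENNReal.ofReal_ne_top)), hac.ae_le hdens] with X h1 h2
  rw [gibbs, h1, h2]

theorem log_rnDeriv_pi_gibbs {μ : EuclideanSpace ℝ (Fin d) → ℝ} (hμ : Measurable μ)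
    (hμ_pos : ∀ᵐ x ∂densMeasure d μ, 0 < μ x)
    (hg : Measurable (Function.uncurry g)) (hV : Measurable V) (hZ : 0 < Zpart d N β g V) :
    (fun X ↦ log ((Measure.pi fun _ ↦ densMeasure d μ).rnDeriv (gibbs d N β g V) X).toReal)
      =ᵐ[Measure.pi fun _ ↦ densMeasure d μ] fun X ↦
        ∑ i, log (μ (X i)) + β * HamN d N g V X + log (Zpart d N β g V) := by
  have hpos : ∀ᵐ X ∂Measure.pi (fun _ : Fin N ↦ densMeasure d μ), ∀ i, 0 < μ (X i) :=
    ae_all_iff.2 fun i ↦ (Measure.quasiMeasurePreserving_eval (fun _ ↦ densMeasure d μ) i).ae hμ_pos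
  filter_upwards [rnDeriv_pi_gibbs hμ hg hV hZ, hpos] with X hX hXpos
  have hq : 0 < exp (-(β * HamN d N g V X)) / Zpart d N β g V := div_pos (exp_pos _) hZ
  have hprod : (∏ i, ENNReal.ofReal (μ (X i))).toReal = ∏ i, μ (X i) := by
    rw [ENNReal.toReal_prod]
    exact Finset.prod_congr rfl fun i _ ↦ ENNReal.toReal_ofReal (hXpos i).le
  rw [hX, ENNReal.toReal_mul, ENNReal.toReal_inv, ENNReal.toReal_ofReal hq.le, hprod,
    log_mul (inv_pos.2 hq).ne' (Finset.prod_pos fun i _ ↦ hXpos i).ne', log_inv,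
    log_div (exp_ne_zero _) hZ.ne', log_exp, log_prod fun i _ ↦ (hXpos i).ne']
  ring

theorem relEnt_pi_gibbs {μ : EuclideanSpace ℝ (Fin d) → ℝ} (hμ : Measurable μ)
    [IsProbabilityMeasure (densMeasure d μ)] (hμ_pos : ∀ᵐ x ∂densMeasure d μ, 0 < μ x)
    (hμ_log : Integrable (fun x ↦ log (μ x)) (densMeasure d μ))
    (hg : Measurable (Function.uncurry g))
    (hg_int : Integrable (Function.uncurry g) ((densMeasure d μ).prod (densMeasure d μ)))
    (hV : Measurable V) (hV_int : Integrable V (densMeasure d μ))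
    (hβ : β ≠ 0) (hN : N ≠ 0) (hZ : 0 < Zpart d N β g V) :
    relEnt N (Measure.pi fun _ ↦ densMeasure d μ) (gibbs d N β g V)
      = β * meanFE d β g V μ
        - β * (∫ x, ∫ y, g x y ∂densMeasure d μ ∂densMeasure d μ) / (2 * N)
        + log (Zpart d N β g V) / N := by
  have hlog_sum : Integrable (fun X ↦ ∑ i, log (μ (X i)))
      (Measure.pi fun _ : Fin N ↦ densMeasure d μ) :=
    integrable_sum_comp_eval hμ_log
  have hHam : Integrable (fun X ↦ β * HamN d N g V X)
      (Measure.pi fun _ : Fin N ↦ densMeasure d μ) :=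
    (integrable_HamN_pi hV_int hg_int).const_mul β
  rw [relEnt, integral_congr_ae (log_rnDeriv_pi_gibbs hμ hμ_pos hg hV hZ),
    integral_add (f := fun X ↦ ∑ i, log (μ (X i)) + β * HamN d N g V X) (hlog_sum.add hHam)
      (integrable_const _),
    integral_add hlog_sum hHam,
    integral_sum_comp_eval hμ_log, integral_const_mul, integral_HamN_pi hN hV_int hg_int]
  simp only [Fintype.card_fin, probReal_univ, one_smul, integral_const, meanFE]
  field_simp
  ring

theorem meanFE_eq_of_char {μβ : EuclideanSpace ℝ (Fin d) → ℝ}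
    [IsProbabilityMeasure (densMeasure d μβ)] {c : ℝ}
    (hchar : ∀ x, μβ x = exp (β * (c - V x - ∫ y, g x y ∂densMeasure d μβ)))
    (hg_int : Integrable (Function.uncurry g) ((densMeasure d μβ).prod (densMeasure d μβ)))
    (hV_int : Integrable V (densMeasure d μβ)) (hβ : β ≠ 0) :
    meanFE d β g V μβ = c - (∫ x, ∫ y, g x y ∂densMeasure d μβ ∂densMeasure d μβ) / 2 := by
  have hlog : ∫ x, log (μβ x) ∂densMeasure d μβ
      = β * (c - ∫ x, V x ∂densMeasure d μβ
          - ∫ x, ∫ y, g x y ∂densMeasure d μβ ∂densMeasure d μβ) := by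
    simp_rw [hchar, log_exp]
    have hconv : Integrable (fun x ↦ ∫ y, g x y ∂densMeasure d μβ) (densMeasure d μβ) :=
      hg_int.integral_prod_left
    have hcV : Integrable (fun x ↦ c - V x) (densMeasure d μβ) := (integrable_const c).sub hV_int
    rw [integral_const_mul, integral_sub hcV hconv, integral_sub (integrable_const c) hV_int]
    simp
  rw [meanFE, hlog]
  field_simp
  ring

end MeanField

theorem stmt_18_general (d : ℕ) (β : ℝ) (hβ : 0 < β)
    (g : EuclideanSpace ℝ (Fin d) → EuclideanSpace ℝ (Fin d) → ℝ)
    (hg_meas : Measurable (Function.uncurry g))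
    (V : EuclideanSpace ℝ (Fin d) → ℝ) (hV_meas : Measurable V)
    (μβ : EuclideanSpace ℝ (Fin d) → ℝ) (hμβ_meas : Measurable μβ)
    (hμβ_prob : IsProbabilityMeasure (densMeasure d μβ))
    (cβ : ℝ)
    -- the characterization `g∗μ_β + V + (1/β) log μ_β = c_β` everywhere (solved form):
    (hchar : ∀ x, μβ x = Real.exp (β * (cβ - V x - ∫ y, g x y ∂(densMeasure d μβ))))
    (μ : EuclideanSpace ℝ (Fin d) → ℝ) (hμ_meas : Measurable μ)
    (hμ_prob : IsProbabilityMeasure (densMeasure d μ))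
    (hμ_pos : ∀ᵐ x ∂(densMeasure d μ), 0 < μ x)
    -- `∬ |g| d(μ+μ_β) d(μ+μ_β) < ∞`:
    (hg_int : Integrable (Function.uncurry g)
      ((densMeasure d μ + densMeasure d μβ).prod (densMeasure d μ + densMeasure d μβ)))
    -- `∫ |V| dμ < ∞` and `∫ |V| dμ_β < ∞`:
    (hV_int : Integrable V (densMeasure d μ + densMeasure d μβ))
    -- `∫ μ|log μ| < ∞` and `∫ μ_β|log μ_β| < ∞`:
    (hμlog_int : Integrable (fun x => Real.log (μ x)) (densMeasure d μ))
    -- `Z_{N,β}^V ∈ (0,∞)` for every `N ≥ 1`: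
    (hZ_pos : ∀ N : ℕ, 1 ≤ N → 0 < Zpart d N β g V)
    -- `(1/N) log K_{N,β}(μ_β) → 0`:
    (hK_lim : Filter.Tendsto
      (fun N : ℕ => Real.log (Kpart d N β g (densMeasure d μβ)) / N)
      Filter.atTop (nhds 0)) :
    Filter.Tendsto
      (fun N : ℕ => relEnt N (Measure.pi fun _ : Fin N => densMeasure d μ) (gibbs d N β g V))
      Filter.atTop (nhds (β * (meanFE d β g V μ - meanFE d β g V μβ))) := by
  set ρ := densMeasure d μ
  set ρβ := densMeasure d μβ
  obtain ⟨hVρ, hVρβ⟩ := integrable_add_measure.mp hV_int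
  have hgρ : Integrable (Function.uncurry g) (ρ.prod ρ) :=
    hg_int.mono_measure (Measure.prod_mono (Measure.le_add_right le_rfl)
      (Measure.le_add_right le_rfl))
  have hgρβ : Integrable (Function.uncurry g) (ρβ.prod ρβ) :=
    hg_int.mono_measure (Measure.prod_mono (Measure.le_add_left le_rfl)
      (Measure.le_add_left le_rfl))
  have hrel : ∀ N ≥ 1, relEnt N (Measure.pi fun _ : Fin N => ρ) (gibbs d N β g V)
      = β * (meanFE d β g V μ - meanFE d β g V μβ) - β * (∫ x, ∫ y, g x y ∂ρ ∂ρ) / (2 * N)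
        + log (Kpart d N β g ρβ) / N := by
    intro N hN
    have hN0 : N ≠ 0 := Nat.one_le_iff_ne_zero.mp hN
    rw [relEnt_pi_gibbs hμ_meas hμ_pos hμlog_int hg_meas hgρ hV_meas hVρ hβ.ne' hN0 (hZ_pos N hN),
      Kpart_eq_exp_mul_Zpart hμβ_meas hchar hN0, log_mul (exp_ne_zero _) (hZ_pos N hN).ne',
      log_exp, meanFE_eq_of_char hchar hgρβ hVρβ hβ.ne']
    field_simp
    ring
  refine Filter.Tendsto.congr' (Filter.eventually_atTop.2 ⟨1, fun N hN ↦ (hrel N hN).symm⟩) ?_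
  have hdecay : Filter.Tendsto (fun N : ℕ => β * (∫ x, ∫ y, g x y ∂ρ ∂ρ) / (2 * N))
      Filter.atTop (nhds 0) :=
    tendsto_const_nhds.div_atTop (tendsto_natCast_atTop_atTop.const_mul_atTop two_pos)
  simpa using (tendsto_const_nhds.sub hdecay).add hK_lim

/-- **Infinite-volume limit of the relative entropy with respect to the Gibbs measure.**
Under the stated integrability and characterization hypotheses on the thermal equilibrium
density `μ_β` and on the density `μ`, if `Z_{N,β}^V ∈ (0,∞)` for every `N ≥ 1` and
`(1/N) log K_{N,β}(μ_β) → 0`, then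
`H_N(μ^{⊗N} | P_{N,β}^V) → β(𝓔_β(μ) − 𝓔_β(μ_β))` as `N → ∞`. -/
theorem stmt_18 (d : ℕ) (hd : 1 ≤ d) (β : ℝ) (hβ : 0 < β)
    (g : EuclideanSpace ℝ (Fin d) → EuclideanSpace ℝ (Fin d) → ℝ)
    (hg_symm : ∀ x y, g x y = g y x)
    (hg_meas : Measurable (Function.uncurry g))
    (V : EuclideanSpace ℝ (Fin d) → ℝ) (hV_meas : Measurable V)
    (μβ : EuclideanSpace ℝ (Fin d) → ℝ) (hμβ_meas : Measurable μβ)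
    (hμβ_prob : IsProbabilityMeasure (densMeasure d μβ))
    -- `g∗μ_β(x)` finite for every `x`:
    (hconvβ_int : ∀ x, Integrable (fun y => g x y) (densMeasure d μβ))
    (cβ : ℝ)
    -- the characterization `g∗μ_β + V + (1/β) log μ_β = c_β` everywhere (solved form):
    (hchar : ∀ x, μβ x = Real.exp (β * (cβ - V x - ∫ y, g x y ∂(densMeasure d μβ))))
    (μ : EuclideanSpace ℝ (Fin d) → ℝ) (hμ_meas : Measurable μ)
    (hμ_prob : IsProbabilityMeasure (densMeasure d μ))
    (hμ_pos : ∀ᵐ x ∂(densMeasure d μ), 0 < μ x)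
    -- `∬ |g| d(μ+μ_β) d(μ+μ_β) < ∞`:
    (hg_int : Integrable (Function.uncurry g)
      ((densMeasure d μ + densMeasure d μβ).prod (densMeasure d μ + densMeasure d μβ)))
    -- `∫ |V| dμ < ∞` and `∫ |V| dμ_β < ∞`:
    (hV_int : Integrable V (densMeasure d μ + densMeasure d μβ))
    -- `∫ μ|log μ| < ∞` and `∫ μ_β|log μ_β| < ∞`:
    (hμlog_int : Integrable (fun x => Real.log (μ x)) (densMeasure d μ))
    (hμβlog_int : Integrable (fun x => Real.log (μβ x)) (densMeasure d μβ))
    -- `∫ |log(μ/μ_β)| dμ < ∞`: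
    (hratio_int : Integrable (fun x => Real.log (μ x / μβ x)) (densMeasure d μ))
    -- `Z_{N,β}^V ∈ (0,∞)` for every `N ≥ 1`:
    (hZ_pos : ∀ N : ℕ, 1 ≤ N → 0 < Zpart d N β g V)
    (hZ_int : ∀ N : ℕ, 1 ≤ N → Integrable (fun X => Real.exp (-(β * HamN d N g V X)))
      (volume : Measure (Fin N → EuclideanSpace ℝ (Fin d))))
    -- `(1/N) log K_{N,β}(μ_β) → 0`:
    (hK_lim : Filter.Tendsto
      (fun N : ℕ => Real.log (Kpart d N β g (densMeasure d μβ)) / N)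
      Filter.atTop (nhds 0)) :
    Filter.Tendsto
      (fun N : ℕ => relEnt N (Measure.pi fun _ : Fin N => densMeasure d μ) (gibbs d N β g V))
      Filter.atTop (nhds (β * (meanFE d β g V μ - meanFE d β g V μβ))) :=
  stmt_18_general d β hβ g hg_meas V hV_meas μβ hμβ_meas hμβ_prob cβ hchar μ hμ_meas hμ_prob hμ_pos
    hg_int hV_int hμlog_int hZ_pos hK_lim
end
end

section
/- Let d ≥ 1, β > 0, let g : ℝ^d × ℝ^d → ℝ be symmetric and measurable, let V : ℝ^d → ℝ be measurable, and let μ_β be a probability density on ℝ^d such that g∗μ_β is finite everywhere and g∗μ_β + V + (1/β) log μ_β = c_β everywhere on ℝ^d for some constant c_β. Let μ be a probability density on ℝ^d with μ > 0 μ-almost everywhere, such that ∬ |g| d(μ + μ_β) ⊗ d(μ + μ_β) < ∞, ∫ |V| d(μ + μ_β) < ∞, ∫ μ |log μ| < ∞, ∫ μ_β |log μ_β| < ∞, and ∫ |log(μ/μ_β)| dμ < ∞. Then 𝓔_β(μ) − 𝓔_β(μ_β) = (1/β) ∫ log(μ/μ_β) dμ + (1/2) ∬ g(x, y) d(μ −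 μ_β)(x) d(μ − μ_β)(y). -/
open MeasureTheory

noncomputable section

/-- **Free energy excess identity.** Let `μ_β` be a probability density with `g∗μ_β`
finite everywhere, satisfying `g∗μ_β + V + (1/β) log μ_β = c_β` (in the solved form
`μ_β = exp(β(c_β − V − g∗μ_β))`). Let `μ` be a probability density, positive `μ`-a.e.,
with `∬ |g| d(μ+μ_β) d(μ+μ_β) < ∞`, `∫ |V| d(μ+μ_β) < ∞`, `∫ μ|log μ|`, `∫ μ_β|log μ_β|`,
`∫ |log(μ/μ_β)| dμ` all finite. Then
`𝓔_β(μ) − 𝓔_β(μ_β) = (1/β) ∫ log(μ/μ_β) dμ + (1/2) ∬ g d(μ−μ_β) d(μ−μ_β)`,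
the last term being written out as
`(1/2)(∬ g dμ dμ − 2 ∬ g dμ dμ_β + ∬ g dμ_β dμ_β)`. -/
theorem stmt_19 (d : ℕ) (hd : 1 ≤ d) (β : ℝ) (hβ : 0 < β)
    (g : EuclideanSpace ℝ (Fin d) → EuclideanSpace ℝ (Fin d) → ℝ)
    (hg_symm : ∀ x y, g x y = g y x)
    (hg_meas : Measurable (Function.uncurry g))
    (V : EuclideanSpace ℝ (Fin d) → ℝ) (hV_meas : Measurable V)
    (μβ : EuclideanSpace ℝ (Fin d) → ℝ) (hμβ_meas : Measurable μβ)
    (hμβ_prob : IsProbabilityMeasure (densMeasure d μβ))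
    (hconvβ_int : ∀ x, Integrable (fun y => g x y) (densMeasure d μβ))
    (cβ : ℝ)
    (hchar : ∀ x, μβ x = Real.exp (β * (cβ - V x - ∫ y, g x y ∂(densMeasure d μβ))))
    (μ : EuclideanSpace ℝ (Fin d) → ℝ) (hμ_meas : Measurable μ)
    (hμ_prob : IsProbabilityMeasure (densMeasure d μ))
    (hμ_pos : ∀ᵐ x ∂(densMeasure d μ), 0 < μ x)
    -- `∬ |g| d(μ+μ_β) d(μ+μ_β) < ∞`:
    (hg_int : Integrable (Function.uncurry g)
      ((densMeasure d μ + densMeasure d μβ).prod (densMeasure d μ + densMeasure d μβ)))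
    -- `∫ |V| d(μ+μ_β) < ∞`:
    (hV_int : Integrable V (densMeasure d μ + densMeasure d μβ))
    -- `∫ μ|log μ| < ∞` and `∫ μ_β|log μ_β| < ∞`:
    (hμlog_int : Integrable (fun x => Real.log (μ x)) (densMeasure d μ))
    (hμβlog_int : Integrable (fun x => Real.log (μβ x)) (densMeasure d μβ))
    -- `∫ |log(μ/μ_β)| dμ < ∞`:
    (hratio_int : Integrable (fun x => Real.log (μ x / μβ x)) (densMeasure d μ)) :
    meanFE d β g V μ - meanFE d β g V μβ
      = (1 / β) * (∫ x, Real.log (μ x / μβ x) ∂(densMeasure d μ))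
        + (1 / 2) * ((∫ x, ∫ y, g x y ∂(densMeasure d μ) ∂(densMeasure d μ))
            - 2 * (∫ x, ∫ y, g x y ∂(densMeasure d μβ) ∂(densMeasure d μ))
            + ∫ x, ∫ y, g x y ∂(densMeasure d μβ) ∂(densMeasure d μβ)) := by
  haveI := hμ_prob
  haveI := hμβ_prob
  have hβ0 : β ≠ 0 := ne_of_gt hβ
  set Mμ := densMeasure d μ with hMμ
  set Mβ := densMeasure d μβ with hMβ
  set h : EuclideanSpace ℝ (Fin d) → ℝ := fun x => ∫ y, g x y ∂Mβ with hhdef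
  have hμβ_pos : ∀ x, 0 < μβ x := fun x => by rw [hchar]; exact Real.exp_pos _
  have hlog : ∀ x, Real.log (μβ x) = β * (cβ - V x - h x) := fun x => by
    rw [hchar]; exact Real.log_exp _
  have hVμ : Integrable V Mμ := (integrable_add_measure.mp hV_int).1
  have hVβ : Integrable V Mβ := (integrable_add_measure.mp hV_int).2
  have eprod : (Mμ + Mβ).prod (Mμ + Mβ)
      = Mμ.prod Mμ + Mμ.prod Mβ + (Mβ.prod Mμ + Mβ.prod Mβ) := by
    rw [Measure.add_prod, Measure.prod_add, Measure.prod_add]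
  rw [eprod] at hg_int
  have hg1 := integrable_add_measure.mp hg_int
  have hgμβ : Integrable (Function.uncurry g) (Mμ.prod Mβ) :=
    (integrable_add_measure.mp hg1.1).2
  have hgββ : Integrable (Function.uncurry g) (Mβ.prod Mβ) :=
    (integrable_add_measure.mp hg1.2).2
  have hhμ : Integrable h Mμ := hgμβ.integral_prod_left
  have hhβ : Integrable h Mβ := hgββ.integral_prod_left
  have hlogβ_int : ∀ (ν : Measure (EuclideanSpace ℝ (Fin d))) [IsProbabilityMeasure ν],
      Integrable V ν → Integrable h ν →
      (Integrable (fun x => Real.log (μβ x)) ν ∧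
        ∫ x, Real.log (μβ x) ∂ν = β * (cβ - ∫ x, V x ∂ν - ∫ x, h x ∂ν)) := by
    intro ν _ hVν hhν
    have hint : Integrable (fun x => β * (cβ - V x - h x)) ν :=
      (((integrable_const cβ).sub hVν).sub hhν).const_mul β
    constructor
    · exact hint.congr (Filter.Eventually.of_forall fun x => (hlog x).symm)
    · have h1 : Integrable (fun a => cβ - V a) ν := (integrable_const cβ).sub hVν
      rw [integral_congr_ae (Filter.Eventually.of_forall hlog),
        integral_const_mul, integral_sub h1 hhν,
        integral_sub (integrable_const cβ) hVν, integral_const]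
      simp
  obtain ⟨hlogβμ_int, Iβμ⟩ := hlogβ_int Mμ hVμ hhμ
  obtain ⟨_, Iββ⟩ := hlogβ_int Mβ hVβ hhβ
  have hratio_eq : ∫ x, Real.log (μ x / μβ x) ∂Mμ
      = ∫ x, Real.log (μ x) ∂Mμ - ∫ x, Real.log (μβ x) ∂Mμ := by
    rw [← integral_sub hμlog_int hlogβμ_int]
    apply integral_congr_ae
    filter_upwards [hμ_pos] with x hx
    rw [Real.log_div hx.ne' (hμβ_pos x).ne']
  have hLβ : ∫ x, Real.log (μβ x) ∂Mβ = β * (cβ - ∫ x, V x ∂Mβ - ∫ x, h x ∂Mβ) := Iββ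
  have hB : (∫ x, ∫ y, g x y ∂Mβ ∂Mμ) = ∫ x, h x ∂Mμ := rfl
  have hC : (∫ x, ∫ y, g x y ∂Mβ ∂Mβ) = ∫ x, h x ∂Mβ := rfl
  simp only [meanFE, ← hMμ, ← hMβ, hB, hC, hratio_eq, Iβμ, hLβ]
  field_simp
  ring
end
end
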